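/- Let (X, B, μ) be a probability measure space and T₁, T₂, T₃ three weakly mixing measure preserving transformations of (X, B, μ) (not necessarily commuting). Then for all bounded measurable functions f₁, f₂, f₃ : X → ℝ, the functions x ↦ (1/N²) ∑_{m,n=1}^N f₁(T₁ⁿx) f₂(T₂ᵐx) f₃(T₃^{n+m}x) converge in L¹(μ) norm, as N → ∞, to the constant (∫ f₁ dμ)(∫ f₂ dμ)(∫ f₃ dμ). -/

import Mathlib

open MeasureTheory Filter Finset

/-- A measure preserving transformation `T` of a probability space is weakly mixing
if for all measurable sets `A`, `B` one has
`lim_N (1/N) ∑_{n=1}^N |μ(A ∩ T⁻ⁿB) − μ(A)μ(B)| = 0`. -/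
def WeaklyMixing {X : Type*} [MeasurableSpace X] (μ : Measure X) (T : X → X) : Prop :=
  MeasurePreserving T μ μ ∧
    ∀ A B : Set X, MeasurableSet A → MeasurableSet B →
      Tendsto (fun N : ℕ => (1 / (N : ℝ)) * ∑ n ∈ Finset.Icc 1 N,
          |(μ (A ∩ T^[n] ⁻¹' B)).toReal - (μ A).toReal * (μ B).toReal|)
        atTop (nhds 0)

section Aux
variable {X : Type*} [MeasurableSpace X] {μ : Measure X} {T : X → X}
variable {X : Type*} [MeasurableSpace X] {μ : Measure X} {T : X → X}

lemma bdd_integrable [IsProbabilityMeasure μ] {f : X → ℝ} {C : ℝ}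
    (hf : Measurable f) (hb : ∀ x, |f x| ≤ C) : Integrable f μ :=
  ⟨hf.aestronglyMeasurable, HasFiniteIntegral.of_bounded (C := C)
    (ae_of_all _ fun x => by simpa [Real.norm_eq_abs] using hb x)⟩

lemma integral_comp_iter (hT : MeasurePreserving T μ μ) {f : X → ℝ} (hf : Measurable f) (k : ℕ) :
    ∫ x, f (T^[k] x) ∂μ = ∫ x, f x ∂μ := by
  rw [← integral_map (hT.iterate k).measurable.aemeasurable hf.aestronglyMeasurable,
    (hT.iterate k).map_eq]

lemma int_abs_le_sqrt [IsProbabilityMeasure μ] {f : X → ℝ} {C : ℝ}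
    (hf : Measurable f) (hb : ∀ x, |f x| ≤ C) :
    ∫ x, |f x| ∂μ ≤ Real.sqrt (∫ x, (f x)^2 ∂μ) := by
  set c := ∫ x, |f x| ∂μ with hc_def
  have hc : 0 ≤ c := integral_nonneg fun x => abs_nonneg _
  have habs : Integrable (fun x => |f x|) μ :=
    bdd_integrable hf.abs (C := C) (fun x => by simpa [abs_abs] using hb x)
  have hsq : Integrable (fun x => (f x)^2) μ := by
    have hC : (0:ℝ) ≤ C := by
      have : Nonempty X := by
        by_contra h
        rw [not_nonempty_iff] at h
        have := measure_univ (μ := μ)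
        rw [Set.univ_eq_empty_iff.mpr h, measure_empty] at this
        simp at this
      exact le_trans (abs_nonneg _) (hb (Classical.arbitrary X))
    apply bdd_integrable (hf.pow_const 2) (C := C^2)
    intro x
    rw [abs_pow, ← sq_abs]
    exact pow_le_pow_left₀ (abs_nonneg _) (by simpa using hb x) 2
  have hsub : Integrable (fun x => f x ^ 2 - 2*c*|f x|) μ := hsq.sub (habs.const_mul _)
  have key : 0 ≤ ∫ x, (f x)^2 ∂μ - c^2 := by
    have expand : ∫ x, (|f x| - c)^2 ∂μ = ∫ x, (f x)^2 ∂μ - c^2 := by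
      have hpt : (fun x => (|f x| - c)^2) = fun x => (f x^2 - 2*c*|f x|) + c^2 := by
        funext x; rw [← sq_abs (f x)]; ring
      rw [hpt, integral_add hsub (integrable_const _),
        integral_sub hsq (habs.const_mul _), integral_const_mul, integral_const]
      simp [← hc_def]
      ring
    rw [← expand]
    exact integral_nonneg fun x => sq_nonneg _
  have h2 : c^2 ≤ ∫ x, (f x)^2 ∂μ := by linarith
  calc c ≤ Real.sqrt (c^2) := by rw [Real.sqrt_sq hc]
    _ ≤ _ := Real.sqrt_le_sqrt h2

lemma cesaro_le_of_le {a b : ℕ → ℝ} (h0 : ∀ k, 0 ≤ a k) (hle : ∀ k, a k ≤ b k)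
    (hb : Tendsto (fun N : ℕ => (1/(N:ℝ)) * ∑ k ∈ Icc 1 N, b k) atTop (nhds 0)) :
    Tendsto (fun N : ℕ => (1/(N:ℝ)) * ∑ k ∈ Icc 1 N, a k) atTop (nhds 0) := by
  apply squeeze_zero (fun N => mul_nonneg (by positivity) (Finset.sum_nonneg fun k _ => h0 k)) (fun N => ?_) hb
  apply mul_le_mul_of_nonneg_left (Finset.sum_le_sum fun k _ => hle k) (by positivity)

lemma cesaro_abs_add_le {a b c : ℕ → ℝ} (hc : ∀ k, |c k| ≤ |a k| + |b k|)
    (ha : Tendsto (fun N : ℕ => (1/(N:ℝ)) * ∑ k ∈ Icc 1 N, |a k|) atTop (nhds 0))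
    (hb : Tendsto (fun N : ℕ => (1/(N:ℝ)) * ∑ k ∈ Icc 1 N, |b k|) atTop (nhds 0)) :
    Tendsto (fun N : ℕ => (1/(N:ℝ)) * ∑ k ∈ Icc 1 N, |c k|) atTop (nhds 0) := by
  apply cesaro_le_of_le (fun k => abs_nonneg _) hc
  have := ha.add hb
  simpa [mul_add, Finset.sum_add_distrib] using this

lemma cesaro_abs_mul (c : ℝ) {a : ℕ → ℝ}
    (ha : Tendsto (fun N : ℕ => (1/(N:ℝ)) * ∑ k ∈ Icc 1 N, |a k|) atTop (nhds 0)) :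
    Tendsto (fun N : ℕ => (1/(N:ℝ)) * ∑ k ∈ Icc 1 N, |c * a k|) atTop (nhds 0) := by
  have heq : ∀ N : ℕ, (1/(N:ℝ)) * ∑ k ∈ Icc 1 N, |c * a k|
      = |c| * ((1/(N:ℝ)) * ∑ k ∈ Icc 1 N, |a k|) := by
    intro N
    simp only [abs_mul]
    rw [← Finset.mul_sum]
    ring
  have := ha.const_mul |c|
  rw [mul_zero] at this
  exact Tendsto.congr (fun N => (heq N).symm) this

lemma tendsto_of_approx {F : ℕ → ℝ} (h0 : ∀ N, 0 ≤ F N)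
    (h : ∀ ε > 0, ∃ G : ℕ → ℝ, Tendsto G atTop (nhds 0) ∧ ∀ᶠ N in atTop, F N ≤ G N + ε) :
    Tendsto F atTop (nhds 0) := by
  rw [Metric.tendsto_atTop]
  intro ε hε
  obtain ⟨G, hG, hFG⟩ := h (ε/4) (by linarith)
  rw [Metric.tendsto_atTop] at hG
  obtain ⟨N₁, hN₁⟩ := hG (ε/4) (by linarith)
  obtain ⟨N₂, hN₂⟩ := Filter.eventually_atTop.mp hFG
  refine ⟨max N₁ N₂, fun n hn => ?_⟩
  have h1 : |G n| < ε/4 := by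
    simpa [Real.dist_eq] using hN₁ n (le_trans (le_max_left _ _) hn)
  have h2 := hN₂ n (le_trans (le_max_right _ _) hn)
  have h3 : F n < ε := by
    have := abs_le.mp h1.le
    linarith
  simpa [Real.dist_eq, abs_of_nonneg (h0 n)] using h3

lemma const_div_tendsto (c : ℝ) : Tendsto (fun N : ℕ => c / (N:ℝ)) atTop (nhds 0) :=
  tendsto_const_div_atTop_nhds_zero_nat c

variable {X : Type*} [MeasurableSpace X] {μ : Measure X} {T : X → X}

lemma sq_sum_le_card {ι : Type*} (s : Finset ι) (f : ι → ℝ) :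
    (∑ i ∈ s, f i) ^ 2 ≤ (s.card : ℝ) * ∑ i ∈ s, f i ^ 2 := by
  have := Finset.sum_mul_sq_le_sq_mul_sq s f (fun _ => (1:ℝ))
  simp only [mul_one, one_pow, Finset.sum_const, nsmul_eq_mul] at this
  calc (∑ i ∈ s, f i) ^ 2 ≤ (∑ i ∈ s, f i ^ 2) * s.card := this
    _ = (s.card : ℝ) * ∑ i ∈ s, f i ^ 2 := by ring

lemma range_shift_sum (M : ℕ) (s : ℕ → ℝ) :
    ∑ i ∈ range M, s (i + 1) = ∑ j ∈ Icc 1 M, s j := by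
  rw [show Icc 1 M = Ico 1 (M+1) by rw [Finset.Ico_add_one_right_eq_Icc], Finset.sum_Ico_eq_sum_range]
  simp [add_comm]

lemma tri_comm {M : Type*} [AddCommMonoid M] (D : ℕ) (F : ℕ → ℕ → M) :
    ∑ a ∈ range D, ∑ b ∈ range a, F a b = ∑ b ∈ range D, ∑ a ∈ Ico (b+1) D, F a b := by
  induction D with
  | zero => simp
  | succ D ih =>
      rw [Finset.sum_range_succ, ih, Finset.sum_range_succ]
      have h1 : ∀ b ∈ range D, ∑ a ∈ Ico (b+1) (D+1), F a b
          = ∑ a ∈ Ico (b+1) D, F a b + F D b := by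
        intro b hb
        exact Finset.sum_Ico_succ_top (Nat.succ_le_of_lt (mem_range.mp hb)) _
      rw [Finset.sum_congr rfl h1, Finset.sum_add_distrib]
      simp

lemma square_sum_le (D : ℕ) (t : ℕ → ℕ → ℝ) (hnn : ∀ a b, 0 ≤ t a b)
    (hsym : ∀ a b, t a b = t b a) :
    ∑ a ∈ range D, ∑ b ∈ range D, t a b ≤
      ∑ a ∈ range D, t a a + 2 * ∑ a ∈ range D, ∑ j ∈ Icc 1 (D-1), t a (a+j) := by
  have hupper : ∀ a, a < D → ∑ b ∈ Ico (a+1) D, t a b ≤ ∑ j ∈ Icc 1 (D-1), t a (a+j) := by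
    intro a ha
    rw [Finset.sum_Ico_eq_sum_range]
    have h1 : ∑ i ∈ range (D - (a+1)), t a (a+1+i) = ∑ j ∈ Icc 1 (D - (a+1)), t a (a+j) := by
      rw [← range_shift_sum (D - (a+1)) (fun j => t a (a+j))]
      apply Finset.sum_congr rfl; intro i _; congr 1; omega
    rw [h1]
    apply Finset.sum_le_sum_of_subset_of_nonneg
    · apply Finset.Icc_subset_Icc_right; omega
    · intro j _ _; exact hnn _ _
  have hsplit : ∀ a ∈ range D, ∑ b ∈ range D, t a b
      = (∑ b ∈ range a, t a b + t a a) + ∑ b ∈ Ico (a+1) D, t a b := by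
    intro a ha
    rw [← Finset.sum_range_succ, Finset.sum_range_add_sum_Ico _ (mem_range.mp ha)]
  rw [Finset.sum_congr rfl hsplit]
  rw [Finset.sum_add_distrib, Finset.sum_add_distrib]
  have hlow : ∑ a ∈ range D, ∑ b ∈ range a, t a b ≤ ∑ a ∈ range D, ∑ j ∈ Icc 1 (D-1), t a (a+j) := by
    rw [tri_comm]
    apply Finset.sum_le_sum
    intro b hb
    calc ∑ a ∈ Ico (b+1) D, t a b = ∑ a ∈ Ico (b+1) D, t b a :=
          Finset.sum_congr rfl (fun a _ => hsym a b)
      _ ≤ ∑ j ∈ Icc 1 (D-1), t b (b+j) := hupper b (mem_range.mp hb)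
  have hup : ∑ a ∈ range D, ∑ b ∈ Ico (a+1) D, t a b ≤ ∑ a ∈ range D, ∑ j ∈ Icc 1 (D-1), t a (a+j) :=
    Finset.sum_le_sum fun a ha => hupper a (mem_range.mp ha)
  linarith


end Aux

section FWM
variable {X : Type*} [MeasurableSpace X] {μ : Measure X} {T : X → X}

lemma nonempty_of_prob [IsProbabilityMeasure μ] : Nonempty X := by
  by_contra h
  rw [not_nonempty_iff] at h
  have := measure_univ (μ := μ)
  rw [Set.univ_eq_empty_iff.mpr h, measure_empty] at this
  simp at this

lemma prod_integrable [IsProbabilityMeasure μ] (hT : Measurable T) {g h : X → ℝ}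
    (hg : Measurable g) {Cg : ℝ} (hbg : ∀ x, |g x| ≤ Cg) (hh : Measurable h) {Ch : ℝ}
    (hbh : ∀ x, |h x| ≤ Ch) (k : ℕ) :
    Integrable (fun x => g x * h (T^[k] x)) μ := by
  apply bdd_integrable (hg.mul (hh.comp (hT.iterate k))) (C := Cg * Ch)
  intro x
  show |g x * h (T^[k] x)| ≤ _
  rw [abs_mul]
  exact mul_le_mul (hbg x) (hbh _) (abs_nonneg _) (le_trans (abs_nonneg _) (hbg x))

lemma abs_int_le [IsProbabilityMeasure μ] {h : X → ℝ} (hh : Measurable h) {Ch : ℝ}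
    (hbh : ∀ x, |h x| ≤ Ch) : |∫ x, h x ∂μ| ≤ Ch := by
  calc |∫ x, h x ∂μ| ≤ ∫ x, |h x| ∂μ := by
        simpa [Real.norm_eq_abs] using norm_integral_le_integral_norm h (μ := μ)
    _ ≤ ∫ x, Ch ∂μ := integral_mono (bdd_integrable hh hbh).abs (integrable_const _)
        (fun x => hbh x)
    _ = Ch := by simp

lemma abs_corr_le_left [IsProbabilityMeasure μ] (hT : Measurable T) {g h : X → ℝ}
    (hg : Measurable g) {Cg : ℝ} (hbg : ∀ x, |g x| ≤ Cg) (hh : Measurable h) {Ch : ℝ}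
    (hbh : ∀ x, |h x| ≤ Ch) (hCh : 0 ≤ Ch) (k : ℕ) :
    |(∫ x, g x * h (T^[k] x) ∂μ) - (∫ x, g x ∂μ) * ∫ x, h x ∂μ|
      ≤ 2 * Ch * ∫ x, |g x| ∂μ := by
  have h1 : |∫ x, g x * h (T^[k] x) ∂μ| ≤ Ch * ∫ x, |g x| ∂μ := by
    calc |∫ x, g x * h (T^[k] x) ∂μ| ≤ ∫ x, |g x| * |h (T^[k] x)| ∂μ := by
          simpa [Real.norm_eq_abs] using
            norm_integral_le_integral_norm (fun x => g x * h (T^[k] x)) (μ := μ)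
      _ ≤ ∫ x, Ch * |g x| ∂μ := by
          apply integral_mono
            (prod_integrable hT hg.abs (fun x => by simpa using hbg x)
              hh.abs (fun x => by simpa using hbh x) k)
            ((bdd_integrable hg hbg).abs.const_mul _)
          intro x
          show |g x| * |h (T^[k] x)| ≤ Ch * |g x|
          rw [mul_comm]
          exact mul_le_mul_of_nonneg_right (hbh _) (abs_nonneg _)
      _ = Ch * ∫ x, |g x| ∂μ := integral_const_mul _ _
  have h2 : |(∫ x, g x ∂μ) * ∫ x, h x ∂μ| ≤ Ch * ∫ x, |g x| ∂μ := by
    rw [abs_mul, mul_comm]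
    apply mul_le_mul (abs_int_le hh hbh) ?_ (abs_nonneg _) hCh
    simpa [Real.norm_eq_abs] using norm_integral_le_integral_norm g (μ := μ)
  calc |(∫ x, g x * h (T^[k] x) ∂μ) - (∫ x, g x ∂μ) * ∫ x, h x ∂μ|
      ≤ |∫ x, g x * h (T^[k] x) ∂μ| + |(∫ x, g x ∂μ) * ∫ x, h x ∂μ| := abs_sub _ _
    _ ≤ 2 * Ch * ∫ x, |g x| ∂μ := by linarith

lemma abs_corr_le_right [IsProbabilityMeasure μ] (hT : MeasurePreserving T μ μ) {g h : X → ℝ}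
    (hg : Measurable g) {Cg : ℝ} (hbg : ∀ x, |g x| ≤ Cg) (hCg : 0 ≤ Cg) (hh : Measurable h)
    {Ch : ℝ} (hbh : ∀ x, |h x| ≤ Ch) (k : ℕ) :
    |(∫ x, g x * h (T^[k] x) ∂μ) - (∫ x, g x ∂μ) * ∫ x, h x ∂μ|
      ≤ 2 * Cg * ∫ x, |h x| ∂μ := by
  have h1 : |∫ x, g x * h (T^[k] x) ∂μ| ≤ Cg * ∫ x, |h x| ∂μ := by
    calc |∫ x, g x * h (T^[k] x) ∂μ| ≤ ∫ x, |g x| * |h (T^[k] x)| ∂μ := by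
          simpa [Real.norm_eq_abs] using
            norm_integral_le_integral_norm (fun x => g x * h (T^[k] x)) (μ := μ)
      _ ≤ ∫ x, Cg * |h (T^[k] x)| ∂μ := by
          apply integral_mono
            (prod_integrable hT.measurable hg.abs (fun x => by simpa using hbg x)
              hh.abs (fun x => by simpa using hbh x) k)
          · exact ((bdd_integrable (hh.comp (hT.measurable.iterate k))
              (C := Ch) (fun x => hbh _)).abs.const_mul _)
          intro x
          show |g x| * |h (T^[k] x)| ≤ Cg * |h (T^[k] x)|
          exact mul_le_mul_of_nonneg_right (hbg _) (abs_nonneg _)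
      _ = Cg * ∫ x, |h (T^[k] x)| ∂μ := integral_const_mul _ _
      _ = Cg * ∫ x, |h x| ∂μ := by rw [integral_comp_iter hT hh.abs k]
  have h2 : |(∫ x, g x ∂μ) * ∫ x, h x ∂μ| ≤ Cg * ∫ x, |h x| ∂μ := by
    rw [abs_mul]
    apply mul_le_mul (abs_int_le hg hbg) ?_ (abs_nonneg _) hCg
    simpa [Real.norm_eq_abs] using norm_integral_le_integral_norm h (μ := μ)
  calc |(∫ x, g x * h (T^[k] x) ∂μ) - (∫ x, g x ∂μ) * ∫ x, h x ∂μ|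
      ≤ |∫ x, g x * h (T^[k] x) ∂μ| + |(∫ x, g x ∂μ) * ∫ x, h x ∂μ| := abs_sub _ _
    _ ≤ 2 * Cg * ∫ x, |h x| ∂μ := by linarith

lemma fwm_ind (hT : WeaklyMixing μ T) {A B : Set X} (hA : MeasurableSet A)
    (hB : MeasurableSet B) :
    Tendsto (fun N : ℕ => (1/(N:ℝ)) * ∑ k ∈ Icc 1 N,
      |(∫ x, A.indicator 1 x * B.indicator 1 (T^[k] x) ∂μ)
        - (∫ x, A.indicator 1 x ∂μ) * ∫ x, B.indicator 1 x ∂μ|) atTop (nhds 0) := by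
  have key : ∀ k : ℕ, ∫ x, A.indicator 1 x * B.indicator 1 (T^[k] x) ∂μ
      = (μ (A ∩ T^[k] ⁻¹' B)).toReal := by
    intro k
    have hpt : (fun x => A.indicator (1:X→ℝ) x * B.indicator 1 (T^[k] x))
        = (A ∩ T^[k] ⁻¹' B).indicator 1 := by
      funext x
      by_cases hx : x ∈ A <;> by_cases hy : T^[k] x ∈ B <;>
        simp [Set.indicator_apply, hx, hy, Set.mem_preimage]
    rw [hpt, integral_indicator_one (hA.inter ((hT.1.measurable.iterate k) hB))]; rfl
  have h2 := hT.2 A B hA hB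
  apply Tendsto.congr ?_ h2
  intro N
  congr 1
  apply Finset.sum_congr rfl
  intro k _
  rw [key k, integral_indicator_one hA, integral_indicator_one hB]; rfl

lemma fwm_simple_ind [IsProbabilityMeasure μ] (hT : WeaklyMixing μ T) (g : SimpleFunc X ℝ)
    {B : Set X} (hB : MeasurableSet B) :
    Tendsto (fun N : ℕ => (1/(N:ℝ)) * ∑ k ∈ Icc 1 N,
      |(∫ x, g x * B.indicator 1 (T^[k] x) ∂μ)
        - (∫ x, g x ∂μ) * ∫ x, B.indicator 1 x ∂μ|) atTop (nhds 0) := by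
  induction g using MeasureTheory.SimpleFunc.induction with
  | @const c s hs =>
      have hcoe : ∀ x, (SimpleFunc.piecewise s hs (SimpleFunc.const X c)
          (SimpleFunc.const X 0)) x = c * s.indicator 1 x := by
        intro x
        by_cases hx : x ∈ s <;> simp [SimpleFunc.piecewise_apply, hx, Set.indicator_apply]
      have hDk : ∀ k : ℕ, (∫ x, (SimpleFunc.piecewise s hs (SimpleFunc.const X c)
            (SimpleFunc.const X 0)) x * B.indicator 1 (T^[k] x) ∂μ)
          - (∫ x, (SimpleFunc.piecewise s hs (SimpleFunc.const X c)
            (SimpleFunc.const X 0)) x ∂μ) * ∫ x, B.indicator 1 x ∂μ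
          = c * ((∫ x, s.indicator 1 x * B.indicator 1 (T^[k] x) ∂μ)
            - (∫ x, s.indicator 1 x ∂μ) * ∫ x, B.indicator 1 x ∂μ) := by
        intro k
        have e1 : (fun x => (SimpleFunc.piecewise s hs (SimpleFunc.const X c)
            (SimpleFunc.const X 0)) x * B.indicator 1 (T^[k] x))
            = fun x => c * (s.indicator 1 x * B.indicator 1 (T^[k] x)) := by
          funext x; rw [hcoe x]; ring
        have e2 : (fun x => (SimpleFunc.piecewise s hs (SimpleFunc.const X c)
            (SimpleFunc.const X 0)) x) = fun x => c * s.indicator 1 x := by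
          funext x; rw [hcoe x]
        rw [e1, e2, integral_const_mul, integral_const_mul]
        ring
      simp only [hDk]
      exact cesaro_abs_mul c (fwm_ind hT hs hB)
  | @add f g hdisj hf hg =>
      have hDk : ∀ k : ℕ, (∫ x, (f + g) x * B.indicator 1 (T^[k] x) ∂μ)
          - (∫ x, (f + g) x ∂μ) * ∫ x, B.indicator 1 x ∂μ
          = ((∫ x, f x * B.indicator 1 (T^[k] x) ∂μ)
              - (∫ x, f x ∂μ) * ∫ x, B.indicator 1 x ∂μ)
            + ((∫ x, g x * B.indicator 1 (T^[k] x) ∂μ)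
              - (∫ x, g x ∂μ) * ∫ x, B.indicator 1 x ∂μ) := by
        intro k
        obtain ⟨Cf, hCf⟩ := f.exists_forall_norm_le
        obtain ⟨Cg, hCg⟩ := g.exists_forall_norm_le
        have hIB : ∀ x, |B.indicator (1:X→ℝ) x| ≤ 1 := by
          intro x; by_cases hx : x ∈ B <;> simp [Set.indicator_apply, hx]
        have hif := prod_integrable (μ := μ) hT.1.measurable f.measurable
          (fun x => by simpa [Real.norm_eq_abs] using hCf x)
          (measurable_one.indicator hB) hIB k
        have hig := prod_integrable (μ := μ) hT.1.measurable g.measurable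
          (fun x => by simpa [Real.norm_eq_abs] using hCg x)
          (measurable_one.indicator hB) hIB k
        have e1 : (fun x => (f + g) x * B.indicator 1 (T^[k] x))
            = fun x => f x * B.indicator 1 (T^[k] x) + g x * B.indicator 1 (T^[k] x) := by
          funext x; simp [SimpleFunc.coe_add]; ring
        have e2 : (fun x => (f + g) x) = fun x => f x + g x := by
          funext x; simp [SimpleFunc.coe_add]
        rw [e1, e2, integral_add hif hig,
          integral_add (bdd_integrable f.measurable (C := Cf)
            (fun x => by simpa [Real.norm_eq_abs] using hCf x))
          (bdd_integrable g.measurable (C := Cg)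
            (fun x => by simpa [Real.norm_eq_abs] using hCg x))]
        ring
      simp only [hDk]
      exact cesaro_abs_add_le (fun k => abs_add_le _ _) hf hg

end FWM

section FWM2
variable {X : Type*} [MeasurableSpace X] {μ : Measure X} {T : X → X}

lemma fwm_simple_simple [IsProbabilityMeasure μ] (hT : WeaklyMixing μ T)
    (g : SimpleFunc X ℝ) (h : SimpleFunc X ℝ) :
    Tendsto (fun N : ℕ => (1/(N:ℝ)) * ∑ k ∈ Icc 1 N,
      |(∫ x, g x * h (T^[k] x) ∂μ) - (∫ x, g x ∂μ) * ∫ x, h x ∂μ|) atTop (nhds 0) := by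
  induction h using MeasureTheory.SimpleFunc.induction with
  | @const c s hs =>
      have hcoe : ∀ x, (SimpleFunc.piecewise s hs (SimpleFunc.const X c)
          (SimpleFunc.const X 0)) x = c * s.indicator 1 x := by
        intro x
        by_cases hx : x ∈ s <;> simp [SimpleFunc.piecewise_apply, hx, Set.indicator_apply]
      have hDk : ∀ k : ℕ, (∫ x, g x * (SimpleFunc.piecewise s hs (SimpleFunc.const X c)
            (SimpleFunc.const X 0)) (T^[k] x) ∂μ)
          - (∫ x, g x ∂μ) * ∫ x, (SimpleFunc.piecewise s hs (SimpleFunc.const X c)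
            (SimpleFunc.const X 0)) x ∂μ
          = c * ((∫ x, g x * s.indicator 1 (T^[k] x) ∂μ)
            - (∫ x, g x ∂μ) * ∫ x, s.indicator 1 x ∂μ) := by
        intro k
        have e1 : (fun x => g x * (SimpleFunc.piecewise s hs (SimpleFunc.const X c)
            (SimpleFunc.const X 0)) (T^[k] x))
            = fun x => c * (g x * s.indicator 1 (T^[k] x)) := by
          funext x; rw [hcoe (T^[k] x)]; ring
        have e2 : (fun x => (SimpleFunc.piecewise s hs (SimpleFunc.const X c)
            (SimpleFunc.const X 0)) x) = fun x => c * s.indicator 1 x := by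
          funext x; rw [hcoe x]
        rw [e1, e2, integral_const_mul, integral_const_mul]
        ring
      simp only [hDk]
      exact cesaro_abs_mul c (fwm_simple_ind hT g hs)
  | @add h₁ h₂ hdisj hh₁ hh₂ =>
      have hDk : ∀ k : ℕ, (∫ x, g x * (h₁ + h₂) (T^[k] x) ∂μ)
          - (∫ x, g x ∂μ) * ∫ x, (h₁ + h₂) x ∂μ
          = ((∫ x, g x * h₁ (T^[k] x) ∂μ) - (∫ x, g x ∂μ) * ∫ x, h₁ x ∂μ)
            + ((∫ x, g x * h₂ (T^[k] x) ∂μ) - (∫ x, g x ∂μ) * ∫ x, h₂ x ∂μ) := by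
        intro k
        obtain ⟨Cg, hCg⟩ := g.exists_forall_norm_le
        obtain ⟨C₁, hC₁⟩ := h₁.exists_forall_norm_le
        obtain ⟨C₂, hC₂⟩ := h₂.exists_forall_norm_le
        have hi₁ := prod_integrable (μ := μ) hT.1.measurable g.measurable
          (fun x => by simpa [Real.norm_eq_abs] using hCg x) h₁.measurable
          (fun x => by simpa [Real.norm_eq_abs] using hC₁ x) k
        have hi₂ := prod_integrable (μ := μ) hT.1.measurable g.measurable
          (fun x => by simpa [Real.norm_eq_abs] using hCg x) h₂.measurable
          (fun x => by simpa [Real.norm_eq_abs] using hC₂ x) k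
        have e1 : (fun x => g x * (h₁ + h₂) (T^[k] x))
            = fun x => g x * h₁ (T^[k] x) + g x * h₂ (T^[k] x) := by
          funext x; simp [SimpleFunc.coe_add]; ring
        have e2 : (fun x => (h₁ + h₂) x) = fun x => h₁ x + h₂ x := by
          funext x; simp [SimpleFunc.coe_add]
        rw [e1, e2, integral_add hi₁ hi₂,
          integral_add (bdd_integrable h₁.measurable (C := C₁)
            (fun x => by simpa [Real.norm_eq_abs] using hC₁ x))
          (bdd_integrable h₂.measurable (C := C₂)
            (fun x => by simpa [Real.norm_eq_abs] using hC₂ x))]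
        ring
      simp only [hDk]
      exact cesaro_abs_add_le (fun k => abs_add_le _ _) hh₁ hh₂

lemma fwm_simple_bdd [IsProbabilityMeasure μ] (hT : WeaklyMixing μ T)
    (g : SimpleFunc X ℝ) {h : X → ℝ} (hh : Measurable h) {Ch : ℝ}
    (hbh : ∀ x, |h x| ≤ Ch) :
    Tendsto (fun N : ℕ => (1/(N:ℝ)) * ∑ k ∈ Icc 1 N,
      |(∫ x, g x * h (T^[k] x) ∂μ) - (∫ x, g x ∂μ) * ∫ x, h x ∂μ|) atTop (nhds 0) := by
  have hCh : 0 ≤ Ch := by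
    have : Nonempty X := nonempty_of_prob (μ := μ)
    exact le_trans (abs_nonneg _) (hbh (Classical.arbitrary X))
  obtain ⟨Mg, hMg⟩ := g.exists_forall_norm_le
  set M := max Mg 0 with hM_def
  have hM : ∀ x, |g x| ≤ M := fun x => le_trans (by simpa [Real.norm_eq_abs] using hMg x)
    (le_max_left _ _)
  have hM0 : 0 ≤ M := le_max_right _ _
  apply tendsto_of_approx
  · intro N
    exact mul_nonneg (by positivity) (Finset.sum_nonneg fun k _ => abs_nonneg _)
  intro ε hε
  -- approximating simple functions
  set hn := fun n => SimpleFunc.approxOn h hh Set.univ 0 (Set.mem_univ 0) n with hhn_def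
  have hn_bdd : ∀ n x, |(hn n) x| ≤ 2 * Ch := by
    intro n x
    have := SimpleFunc.norm_approxOn_zero_le hh (Set.mem_univ 0) x n
    rw [Real.norm_eq_abs, Real.norm_eq_abs] at this
    calc |(hn n) x| ≤ |h x| + |h x| := this
      _ ≤ 2 * Ch := by have := hbh x; linarith
  have htend : Tendsto (fun n => ∫ x, |(hn n) x - h x| ∂μ) atTop (nhds 0) := by
    have h0 : (0:ℝ) = ∫ (x : X), (0:ℝ) ∂μ := by simp
    rw [h0]
    apply tendsto_integral_of_dominated_convergence (bound := fun _ => 3 * Ch)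
    · intro n
      exact (((hn n).measurable.sub hh).abs).aestronglyMeasurable
    · exact integrable_const _
    · intro n
      apply ae_of_all
      intro x
      rw [Real.norm_eq_abs, abs_abs]
      calc |(hn n) x - h x| ≤ |(hn n) x| + |h x| := abs_sub _ _
        _ ≤ 3 * Ch := by have := hn_bdd n x; have := hbh x; linarith
    · apply ae_of_all
      intro x
      have h1 : Tendsto (fun n => (hn n) x) atTop (nhds (h x)) :=
        SimpleFunc.tendsto_approxOn hh (Set.mem_univ 0) (by simp)
      have h2 : Tendsto (fun n => (hn n) x - h x) atTop (nhds (h x - h x)) :=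
        h1.sub tendsto_const_nhds
      rw [sub_self] at h2
      simpa using h2.abs
  rw [Metric.tendsto_atTop] at htend
  obtain ⟨n₀, hn₀⟩ := htend (ε / (2*M+1)) (by positivity)
  refine ⟨fun N => (1/(N:ℝ)) * ∑ k ∈ Icc 1 N,
    |(∫ x, g x * (hn n₀) (T^[k] x) ∂μ) - (∫ x, g x ∂μ) * ∫ x, (hn n₀) x ∂μ|,
    fwm_simple_simple hT g (hn n₀), ?_⟩
  filter_upwards [Filter.eventually_ge_atTop 1] with N hN
  have hNpos : (0:ℝ) < N := by exact_mod_cast hN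
  have hflip : (fun x => |(hn n₀) x - h x|) = fun x => |h x - (hn n₀) x| :=
    funext fun x => abs_sub_comm _ _
  have hL1 : ∫ x, |h x - (hn n₀) x| ∂μ ≤ ε / (2*M+1) := by
    have h' := hn₀ n₀ le_rfl
    rw [Real.dist_eq, sub_zero, abs_of_nonneg (integral_nonneg fun x => abs_nonneg _),
      hflip] at h'
    exact h'.le
  have hkey : ∀ k : ℕ, |(∫ x, g x * h (T^[k] x) ∂μ) - (∫ x, g x ∂μ) * ∫ x, h x ∂μ|
      ≤ |(∫ x, g x * (hn n₀) (T^[k] x) ∂μ) - (∫ x, g x ∂μ) * ∫ x, (hn n₀) x ∂μ| + ε := by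
    intro k
    have hdm : Measurable (fun x => h x - (hn n₀) x) := hh.sub (hn n₀).measurable
    have hdb : ∀ x, |h x - (hn n₀) x| ≤ 3 * Ch := by
      intro x
      calc |h x - (hn n₀) x| ≤ |h x| + |(hn n₀) x| := abs_sub _ _
        _ ≤ 3 * Ch := by have := hn_bdd n₀ x; have := hbh x; linarith
    have hsplit : (∫ x, g x * h (T^[k] x) ∂μ) - (∫ x, g x ∂μ) * ∫ x, h x ∂μ
        = ((∫ x, g x * (hn n₀) (T^[k] x) ∂μ) - (∫ x, g x ∂μ) * ∫ x, (hn n₀) x ∂μ)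
          + ((∫ x, g x * (h (T^[k] x) - (hn n₀) (T^[k] x)) ∂μ)
            - (∫ x, g x ∂μ) * ∫ x, (h x - (hn n₀) x) ∂μ) := by
      have i1 := prod_integrable (μ := μ) hT.1.measurable g.measurable hM
        (hn n₀).measurable (hn_bdd n₀) k
      have i2 := prod_integrable (μ := μ) hT.1.measurable g.measurable hM hdm hdb k
      have e1 : (fun x => g x * h (T^[k] x))
          = fun x => g x * (hn n₀) (T^[k] x) + g x * (h (T^[k] x) - (hn n₀) (T^[k] x)) := by
        funext x; ring
      have e3 : ∫ x, h x ∂μ = ∫ x, ((hn n₀) x + (h x - (hn n₀) x)) ∂μ := by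
        congr 1; funext x; ring
      rw [e1, integral_add i1 i2, e3,
        integral_add (bdd_integrable (hn n₀).measurable (hn_bdd n₀))
          (bdd_integrable hdm hdb)]
      ring
    have hpert : |(∫ x, g x * (h (T^[k] x) - (hn n₀) (T^[k] x)) ∂μ)
        - (∫ x, g x ∂μ) * ∫ x, (h x - (hn n₀) x) ∂μ| ≤ ε := by
      have := abs_corr_le_right (μ := μ) hT.1 g.measurable hM hM0 hdm hdb k
      have hεle : 2 * M * ∫ x, |h x - (hn n₀) x| ∂μ ≤ ε := by
        have h2M : (0:ℝ) < 2*M+1 := by linarith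
        calc 2 * M * ∫ x, |h x - (hn n₀) x| ∂μ ≤ 2 * M * (ε / (2*M+1)) := by
              apply mul_le_mul_of_nonneg_left hL1 (by linarith)
          _ = ε * (2*M / (2*M+1)) := by ring
          _ ≤ ε * 1 := by
              apply mul_le_mul_of_nonneg_left _ (le_of_lt hε)
              rw [div_le_one h2M]; linarith
          _ = ε := mul_one ε
      exact le_trans this hεle
    calc |(∫ x, g x * h (T^[k] x) ∂μ) - (∫ x, g x ∂μ) * ∫ x, h x ∂μ|
        ≤ |(∫ x, g x * (hn n₀) (T^[k] x) ∂μ) - (∫ x, g x ∂μ) * ∫ x, (hn n₀) x ∂μ|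
          + |(∫ x, g x * (h (T^[k] x) - (hn n₀) (T^[k] x)) ∂μ)
            - (∫ x, g x ∂μ) * ∫ x, (h x - (hn n₀) x) ∂μ| := by
          rw [hsplit]; exact abs_add_le _ _
      _ ≤ _ := by linarith [hpert]
  have hcard : (((Icc 1 N).card : ℕ) : ℝ) = (N:ℝ) := by
    rw [Nat.card_Icc]; simp
  calc (1/(N:ℝ)) * ∑ k ∈ Icc 1 N,
        |(∫ x, g x * h (T^[k] x) ∂μ) - (∫ x, g x ∂μ) * ∫ x, h x ∂μ|
      ≤ (1/(N:ℝ)) * ∑ k ∈ Icc 1 N,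
        (|(∫ x, g x * (hn n₀) (T^[k] x) ∂μ) - (∫ x, g x ∂μ) * ∫ x, (hn n₀) x ∂μ| + ε) := by
        apply mul_le_mul_of_nonneg_left (Finset.sum_le_sum fun k _ => hkey k) (by positivity)
    _ = (1/(N:ℝ)) * ∑ k ∈ Icc 1 N,
        |(∫ x, g x * (hn n₀) (T^[k] x) ∂μ) - (∫ x, g x ∂μ) * ∫ x, (hn n₀) x ∂μ|
        + (1/(N:ℝ)) * ((N:ℝ) * ε) := by
        rw [Finset.sum_add_distrib, mul_add, Finset.sum_const, nsmul_eq_mul, hcard]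
    _ ≤ _ + ε := by
        have : (1/(N:ℝ)) * ((N:ℝ) * ε) = ε := by field_simp
        rw [this]

lemma fwm [IsProbabilityMeasure μ] (hT : WeaklyMixing μ T) {g h : X → ℝ}
    (hg : Measurable g) {Cg : ℝ} (hbg : ∀ x, |g x| ≤ Cg)
    (hh : Measurable h) {Ch : ℝ} (hbh : ∀ x, |h x| ≤ Ch) :
    Tendsto (fun N : ℕ => (1/(N:ℝ)) * ∑ k ∈ Icc 1 N,
      |(∫ x, g x * h (T^[k] x) ∂μ) - (∫ x, g x ∂μ) * ∫ x, h x ∂μ|) atTop (nhds 0) := by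
  set M := max Ch 0 with hM_def
  have hbh' : ∀ x, |h x| ≤ M := fun x => le_trans (hbh x) (le_max_left _ _)
  have hM0 : 0 ≤ M := le_max_right _ _
  have hCg0 : 0 ≤ Cg := by
    have : Nonempty X := nonempty_of_prob (μ := μ)
    exact le_trans (abs_nonneg _) (hbg (Classical.arbitrary X))
  apply tendsto_of_approx
  · intro N
    exact mul_nonneg (by positivity) (Finset.sum_nonneg fun k _ => abs_nonneg _)
  intro ε hε
  set gn := fun n => SimpleFunc.approxOn g hg Set.univ 0 (Set.mem_univ 0) n with hgn_def
  have gn_bdd : ∀ n x, |(gn n) x| ≤ 2 * Cg := by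
    intro n x
    have := SimpleFunc.norm_approxOn_zero_le hg (Set.mem_univ 0) x n
    rw [Real.norm_eq_abs, Real.norm_eq_abs] at this
    calc |(gn n) x| ≤ |g x| + |g x| := this
      _ ≤ 2 * Cg := by have := hbg x; linarith
  have htend : Tendsto (fun n => ∫ x, |g x - (gn n) x| ∂μ) atTop (nhds 0) := by
    have h0 : (0:ℝ) = ∫ (x : X), (0:ℝ) ∂μ := by simp
    rw [h0]
    apply tendsto_integral_of_dominated_convergence (bound := fun _ => 3 * Cg)
    · intro n
      exact ((hg.sub (gn n).measurable).abs).aestronglyMeasurable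
    · exact integrable_const _
    · intro n
      apply ae_of_all
      intro x
      rw [Real.norm_eq_abs, abs_abs]
      calc |g x - (gn n) x| ≤ |g x| + |(gn n) x| := abs_sub _ _
        _ ≤ 3 * Cg := by have := gn_bdd n x; have := hbg x; linarith
    · apply ae_of_all
      intro x
      have h1 : Tendsto (fun n => (gn n) x) atTop (nhds (g x)) :=
        SimpleFunc.tendsto_approxOn hg (Set.mem_univ 0) (by simp)
      have h2 : Tendsto (fun n => g x - (gn n) x) atTop (nhds (g x - g x)) :=
        tendsto_const_nhds.sub h1
      rw [sub_self] at h2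
      simpa using h2.abs
  rw [Metric.tendsto_atTop] at htend
  obtain ⟨n₀, hn₀⟩ := htend (ε / (2*M+1)) (by positivity)
  have hL1 : ∫ x, |g x - (gn n₀) x| ∂μ ≤ ε / (2*M+1) := by
    have h' := hn₀ n₀ le_rfl
    rw [Real.dist_eq, sub_zero, abs_of_nonneg (integral_nonneg fun x => abs_nonneg _)] at h'
    exact h'.le
  refine ⟨fun N => (1/(N:ℝ)) * ∑ k ∈ Icc 1 N,
    |(∫ x, (gn n₀) x * h (T^[k] x) ∂μ) - (∫ x, (gn n₀) x ∂μ) * ∫ x, h x ∂μ|,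
    fwm_simple_bdd hT (gn n₀) hh hbh, ?_⟩
  filter_upwards [Filter.eventually_ge_atTop 1] with N hN
  have hNpos : (0:ℝ) < N := by exact_mod_cast hN
  have hkey : ∀ k : ℕ, |(∫ x, g x * h (T^[k] x) ∂μ) - (∫ x, g x ∂μ) * ∫ x, h x ∂μ|
      ≤ |(∫ x, (gn n₀) x * h (T^[k] x) ∂μ) - (∫ x, (gn n₀) x ∂μ) * ∫ x, h x ∂μ| + ε := by
    intro k
    have hdm : Measurable (fun x => g x - (gn n₀) x) := hg.sub (gn n₀).measurable
    have hdb : ∀ x, |g x - (gn n₀) x| ≤ 3 * Cg := by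
      intro x
      calc |g x - (gn n₀) x| ≤ |g x| + |(gn n₀) x| := abs_sub _ _
        _ ≤ 3 * Cg := by have := gn_bdd n₀ x; have := hbg x; linarith
    have hsplit : (∫ x, g x * h (T^[k] x) ∂μ) - (∫ x, g x ∂μ) * ∫ x, h x ∂μ
        = ((∫ x, (gn n₀) x * h (T^[k] x) ∂μ) - (∫ x, (gn n₀) x ∂μ) * ∫ x, h x ∂μ)
          + ((∫ x, (g x - (gn n₀) x) * h (T^[k] x) ∂μ)
            - (∫ x, (g x - (gn n₀) x) ∂μ) * ∫ x, h x ∂μ) := by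
      have i1 := prod_integrable (μ := μ) hT.1.measurable (gn n₀).measurable (gn_bdd n₀)
        hh hbh' k
      have i2 := prod_integrable (μ := μ) hT.1.measurable hdm hdb hh hbh' k
      have e1 : (fun x => g x * h (T^[k] x))
          = fun x => (gn n₀) x * h (T^[k] x) + (g x - (gn n₀) x) * h (T^[k] x) := by
        funext x; ring
      have e3 : ∫ x, g x ∂μ = ∫ x, ((gn n₀) x + (g x - (gn n₀) x)) ∂μ := by
        congr 1; funext x; ring
      rw [e1, integral_add i1 i2, e3,
        integral_add (bdd_integrable (gn n₀).measurable (gn_bdd n₀))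
          (bdd_integrable hdm hdb)]
      ring
    have hpert : |(∫ x, (g x - (gn n₀) x) * h (T^[k] x) ∂μ)
        - (∫ x, (g x - (gn n₀) x) ∂μ) * ∫ x, h x ∂μ| ≤ ε := by
      have := abs_corr_le_left (μ := μ) hT.1.measurable hdm hdb hh hbh' hM0 k
      have hεle : 2 * M * ∫ x, |g x - (gn n₀) x| ∂μ ≤ ε := by
        have h2M : (0:ℝ) < 2*M+1 := by linarith
        calc 2 * M * ∫ x, |g x - (gn n₀) x| ∂μ ≤ 2 * M * (ε / (2*M+1)) := by
              apply mul_le_mul_of_nonneg_left hL1 (by linarith)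
          _ = ε * (2*M / (2*M+1)) := by ring
          _ ≤ ε * 1 := by
              apply mul_le_mul_of_nonneg_left _ (le_of_lt hε)
              rw [div_le_one h2M]; linarith
          _ = ε := mul_one ε
      exact le_trans this hεle
    calc |(∫ x, g x * h (T^[k] x) ∂μ) - (∫ x, g x ∂μ) * ∫ x, h x ∂μ|
        ≤ |(∫ x, (gn n₀) x * h (T^[k] x) ∂μ) - (∫ x, (gn n₀) x ∂μ) * ∫ x, h x ∂μ|
          + |(∫ x, (g x - (gn n₀) x) * h (T^[k] x) ∂μ)
            - (∫ x, (g x - (gn n₀) x) ∂μ) * ∫ x, h x ∂μ| := by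
          rw [hsplit]; exact abs_add_le _ _
      _ ≤ _ := by linarith [hpert]
  have hcard : (((Icc 1 N).card : ℕ) : ℝ) = (N:ℝ) := by
    rw [Nat.card_Icc]; simp
  calc (1/(N:ℝ)) * ∑ k ∈ Icc 1 N,
        |(∫ x, g x * h (T^[k] x) ∂μ) - (∫ x, g x ∂μ) * ∫ x, h x ∂μ|
      ≤ (1/(N:ℝ)) * ∑ k ∈ Icc 1 N,
        (|(∫ x, (gn n₀) x * h (T^[k] x) ∂μ) - (∫ x, (gn n₀) x ∂μ) * ∫ x, h x ∂μ| + ε) := by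
        apply mul_le_mul_of_nonneg_left (Finset.sum_le_sum fun k _ => hkey k) (by positivity)
    _ = (1/(N:ℝ)) * ∑ k ∈ Icc 1 N,
        |(∫ x, (gn n₀) x * h (T^[k] x) ∂μ) - (∫ x, (gn n₀) x ∂μ) * ∫ x, h x ∂μ|
        + (1/(N:ℝ)) * ((N:ℝ) * ε) := by
        rw [Finset.sum_add_distrib, mul_add, Finset.sum_const, nsmul_eq_mul, hcard]
    _ ≤ _ + ε := by
        have : (1/(N:ℝ)) * ((N:ℝ) * ε) = ε := by field_simp
        rw [this]

end FWM2

section UL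
variable {X : Type*} [MeasurableSpace X] {μ : Measure X} {T : X → X}

lemma corr_gap [IsProbabilityMeasure μ] (hT : MeasurePreserving T μ μ) {h : X → ℝ}
    (hh : Measurable h) {Ch : ℝ} (hbh : ∀ x, |h x| ≤ Ch) {l l' : ℕ} (hll' : l ≤ l') :
    ∫ x, h (T^[l] x) * h (T^[l'] x) ∂μ = ∫ x, h x * h (T^[l'-l] x) ∂μ := by
  have hpt : (fun x => h (T^[l] x) * h (T^[l'] x))
      = fun x => (fun y => h y * h (T^[l'-l] y)) (T^[l] x) := by
    funext x
    have : T^[l'] x = T^[l'-l] (T^[l] x) := by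
      rw [← Function.iterate_add_apply]
      congr 1
      omega
    rw [this]
  rw [hpt, integral_comp_iter hT (f := fun y => h y * h (T^[l'-l] y))
    (hh.mul (hh.comp (hT.measurable.iterate (l'-l)))) l]

lemma UL [IsProbabilityMeasure μ] (hT : WeaklyMixing μ T) {h : X → ℝ}
    (hh : Measurable h) {Ch : ℝ} (hbh : ∀ x, |h x| ≤ Ch) (hCh : 0 ≤ Ch)
    (hmean : ∫ x, h x ∂μ = 0) :
    ∃ δ : ℕ → ℝ, (∀ M, 0 ≤ δ M) ∧ Tendsto δ atTop (nhds 0) ∧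
      ∀ (M : ℕ) (g : X → ℝ) (Cg : ℝ), Measurable g → (∀ x, |g x| ≤ Cg) → 0 ≤ Cg →
        ∑ l ∈ Icc 1 M, (∫ x, g x * h (T^[l] x) ∂μ)^2 ≤ Cg^2 * (M:ℝ) * δ M := by
  classical
  set r : ℕ → ℝ := fun j => |∫ x, h x * h (T^[j] x) ∂μ| with hr_def
  have hr0 : ∀ j, 0 ≤ r j := fun j => abs_nonneg _
  have hr : Tendsto (fun N : ℕ => (1/(N:ℝ)) * ∑ j ∈ Icc 1 N, r j) atTop (nhds 0) := by
    have := fwm hT hh hbh hh hbh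
    rw [hmean] at this
    simpa using this
  set ε : ℕ → ℝ := fun M => (1/(M:ℝ)) * r 0 + 2 * ((1/(M:ℝ)) * ∑ j ∈ Icc 1 M, r j)
    with hε_def
  have hε0 : ∀ M, 0 ≤ ε M := by
    intro M
    apply add_nonneg (mul_nonneg (by positivity) (hr0 0))
    exact mul_nonneg (by norm_num) (mul_nonneg (by positivity)
      (Finset.sum_nonneg fun j _ => hr0 j))
  have hεt : Tendsto ε atTop (nhds 0) := by
    have h1 : Tendsto (fun M : ℕ => (1/(M:ℝ)) * r 0) atTop (nhds 0) := by
      have := const_div_tendsto (r 0)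
      apply Tendsto.congr ?_ this
      intro M
      rw [div_eq_mul_one_div, mul_comm]
    have h2 := hr.const_mul 2
    rw [mul_zero] at h2
    have := h1.add h2
    rw [add_zero] at this
    exact this
  refine ⟨fun M => Ch * Real.sqrt (ε M),
    fun M => mul_nonneg hCh (Real.sqrt_nonneg _), ?_, ?_⟩
  · have := (hεt.sqrt).const_mul Ch
    simpa using this
  intro M g Cg hg hbg hCg
  set a : ℕ → ℝ := fun l => ∫ x, g x * h (T^[l] x) ∂μ with ha_def
  have ha_bdd : ∀ l, |a l| ≤ Cg * Ch := by
    intro l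
    apply abs_int_le (hg.mul (hh.comp (hT.1.measurable.iterate l)))
    intro x
    simp only [Pi.mul_apply]; rw [abs_mul]
    exact mul_le_mul (hbg x) (hbh _) (abs_nonneg _) hCg
  set v : X → ℝ := fun x => ∑ l ∈ Icc 1 M, a l * h (T^[l] x) with hv_def
  have hv_meas : Measurable v :=
    Finset.measurable_sum _ (fun l _ => (hh.comp (hT.1.measurable.iterate l)).const_mul _)
  have hv_bdd : ∀ x, |v x| ≤ (M:ℝ) * (Cg * Ch * Ch) := by
    intro x
    calc |v x| ≤ ∑ l ∈ Icc 1 M, |a l * h (T^[l] x)| := Finset.abs_sum_le_sum_abs _ _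
      _ ≤ ∑ l ∈ Icc 1 M, Cg * Ch * Ch := by
          apply Finset.sum_le_sum
          intro l _
          rw [abs_mul]
          exact mul_le_mul (ha_bdd l) (hbh _) (abs_nonneg _)
            (mul_nonneg hCg hCh)
      _ = (M:ℝ) * (Cg * Ch * Ch) := by
          rw [Finset.sum_const, nsmul_eq_mul, Nat.card_Icc]; simp
  have prod_int : ∀ l : ℕ, Integrable (fun x => g x * h (T^[l] x)) μ :=
    fun l => prod_integrable hT.1.measurable hg hbg hh hbh l
  have hS_eq : ∑ l ∈ Icc 1 M, (a l)^2 = ∫ x, g x * v x ∂μ := by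
    have e1 : (fun x => g x * v x)
        = fun x => ∑ l ∈ Icc 1 M, a l * (g x * h (T^[l] x)) := by
      funext x
      rw [hv_def, Finset.mul_sum]
      exact Finset.sum_congr rfl fun l _ => by ring
    rw [e1, integral_finset_sum _ (fun l _ => (prod_int l).const_mul (a l))]
    apply Finset.sum_congr rfl
    intro l _
    rw [integral_const_mul]
    simp only [ha_def]
    ring
  have hS_nonneg : 0 ≤ ∑ l ∈ Icc 1 M, (a l)^2 :=
    Finset.sum_nonneg fun l _ => sq_nonneg _
  have hgv_int : Integrable (fun x => g x * v x) μ := by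
    apply bdd_integrable (hg.mul hv_meas) (C := Cg * ((M:ℝ) * (Cg * Ch * Ch)))
    intro x
    simp only [Pi.mul_apply]; rw [abs_mul]
    exact mul_le_mul (hbg x) (hv_bdd x) (abs_nonneg _) hCg
  have hS_le : ∑ l ∈ Icc 1 M, (a l)^2 ≤ Cg * ∫ x, |v x| ∂μ := by
    calc ∑ l ∈ Icc 1 M, (a l)^2 = ∫ x, g x * v x ∂μ := hS_eq
      _ ≤ |∫ x, g x * v x ∂μ| := le_abs_self _
      _ ≤ ∫ x, |g x| * |v x| ∂μ := by
          simpa [Real.norm_eq_abs] using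
            norm_integral_le_integral_norm (fun x => g x * v x) (μ := μ)
      _ ≤ ∫ x, Cg * |v x| ∂μ := by
          apply integral_mono
          · exact (bdd_integrable (hg.abs.mul hv_meas.abs)
              (C := Cg * ((M:ℝ) * (Cg * Ch * Ch))) (fun x => by
                rw [abs_mul, abs_abs, abs_abs]
                exact mul_le_mul (hbg x) (hv_bdd x) (abs_nonneg _) hCg))
          · exact (bdd_integrable hv_meas hv_bdd).abs.const_mul _
          intro x
          show |g x| * |v x| ≤ Cg * |v x|
          exact mul_le_mul_of_nonneg_right (hbg x) (abs_nonneg _)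
      _ = Cg * ∫ x, |v x| ∂μ := integral_const_mul _ _
  have hintv_sqrt : ∫ x, |v x| ∂μ ≤ Real.sqrt (∫ x, (v x)^2 ∂μ) :=
    int_abs_le_sqrt hv_meas hv_bdd
  -- expand ∫ v²
  have hhl_int : ∀ l l' : ℕ, Integrable (fun x => (a l * h (T^[l] x)) * (a l' * h (T^[l'] x))) μ := by
    intro l l'
    apply bdd_integrable
      (((hh.comp (hT.1.measurable.iterate l)).const_mul _).mul
        ((hh.comp (hT.1.measurable.iterate l')).const_mul _))
      (C := (Cg*Ch*Ch) * (Cg*Ch*Ch))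
    intro x
    simp only [Pi.mul_apply]; rw [abs_mul]
    apply mul_le_mul
    · rw [abs_mul]
      exact mul_le_mul (ha_bdd l) (hbh _) (abs_nonneg _) (mul_nonneg hCg hCh)
    · rw [abs_mul]
      exact mul_le_mul (ha_bdd l') (hbh _) (abs_nonneg _) (mul_nonneg hCg hCh)
    · exact abs_nonneg _
    · positivity
  have hv2 : ∫ x, (v x)^2 ∂μ
      = ∑ l ∈ Icc 1 M, ∑ l' ∈ Icc 1 M, (a l * a l') * ∫ x, h (T^[l] x) * h (T^[l'] x) ∂μ := by
    have e1 : (fun x => (v x)^2)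
        = fun x => ∑ l ∈ Icc 1 M, ∑ l' ∈ Icc 1 M,
            (a l * h (T^[l] x)) * (a l' * h (T^[l'] x)) := by
      funext x
      rw [sq, hv_def, Finset.sum_mul_sum]
    rw [e1, integral_finset_sum _ (fun l _ =>
      integrable_finset_sum _ (fun l' _ => hhl_int l l'))]
    apply Finset.sum_congr rfl
    intro l _
    rw [integral_finset_sum _ (fun l' _ => hhl_int l l')]
    apply Finset.sum_congr rfl
    intro l' _
    have e2 : (fun x => (a l * h (T^[l] x)) * (a l' * h (T^[l'] x)))
        = fun x => (a l * a l') * (h (T^[l] x) * h (T^[l'] x)) := by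
      funext x; ring
    rw [e2, integral_const_mul]
  set t : ℕ → ℕ → ℝ := fun l l' => |∫ x, h (T^[l] x) * h (T^[l'] x) ∂μ| with ht_def
  have ht_sym : ∀ l l', t l l' = t l' l := by
    intro l l'
    show |∫ x, h (T^[l] x) * h (T^[l'] x) ∂μ| = |∫ x, h (T^[l'] x) * h (T^[l] x) ∂μ|
    have e : (fun x => h (T^[l] x) * h (T^[l'] x)) = fun x => h (T^[l'] x) * h (T^[l] x) :=
      funext fun x => mul_comm _ _
    rw [e]
  have ht_gap : ∀ l l', l ≤ l' → t l l' = r (l' - l) := by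
    intro l l' hll'
    show |∫ x, h (T^[l] x) * h (T^[l'] x) ∂μ| = |∫ x, h x * h (T^[l'-l] x) ∂μ|
    rw [corr_gap hT.1 hh hbh hll']
  have ht0 : ∀ l l', 0 ≤ t l l' := fun _ _ => abs_nonneg _
  have hv2_le : ∫ x, (v x)^2 ∂μ ≤ (Cg*Ch)^2 * ((M:ℝ) * r 0 + 2 * ((M:ℝ) * ∑ j ∈ Icc 1 M, r j)) := by
    have step1 : ∫ x, (v x)^2 ∂μ ≤ ∑ l ∈ Icc 1 M, ∑ l' ∈ Icc 1 M, (Cg*Ch)^2 * t l l' := by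
      rw [hv2]
      apply Finset.sum_le_sum
      intro l _
      apply Finset.sum_le_sum
      intro l' _
      calc (a l * a l') * ∫ x, h (T^[l] x) * h (T^[l'] x) ∂μ
          ≤ |(a l * a l') * ∫ x, h (T^[l] x) * h (T^[l'] x) ∂μ| := le_abs_self _
        _ = |a l * a l'| * t l l' := by rw [abs_mul]
        _ ≤ (Cg*Ch)^2 * t l l' := by
            apply mul_le_mul_of_nonneg_right ?_ (ht0 _ _)
            rw [abs_mul, sq]
            exact mul_le_mul (ha_bdd l) (ha_bdd l') (abs_nonneg _) (mul_nonneg hCg hCh)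
    have step2 : ∑ l ∈ Icc 1 M, ∑ l' ∈ Icc 1 M, t l l'
        ≤ (M:ℝ) * r 0 + 2 * ((M:ℝ) * ∑ j ∈ Icc 1 M, r j) := by
      have hreix : ∑ l ∈ Icc 1 M, ∑ l' ∈ Icc 1 M, t l l'
          = ∑ p ∈ range M, ∑ q ∈ range M, t (1+p) (1+q) := by
        rw [show Icc 1 M = Ico 1 (M+1) by rw [Finset.Ico_add_one_right_eq_Icc], Finset.sum_Ico_eq_sum_range]
        simp only [Nat.add_sub_cancel]
        apply Finset.sum_congr rfl
        intro p _
        rw [Finset.sum_Ico_eq_sum_range]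
        simp only [Nat.add_sub_cancel]
      rw [hreix]
      have hsq := square_sum_le M (fun p q => t (1+p) (1+q)) (fun p q => ht0 _ _)
        (fun p q => ht_sym _ _)
      apply le_trans hsq
      have hdiag : ∑ p ∈ range M, t (1+p) (1+p) = (M:ℝ) * r 0 := by
        have : ∀ p ∈ range M, t (1+p) (1+p) = r 0 := by
          intro p _
          rw [ht_gap _ _ le_rfl]
          simp
        rw [Finset.sum_congr rfl this, Finset.sum_const, nsmul_eq_mul, Finset.card_range]
      have hoff : ∑ p ∈ range M, ∑ j ∈ Icc 1 (M-1), t (1+p) (1+(p+j))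
          ≤ (M:ℝ) * ∑ j ∈ Icc 1 M, r j := by
        have hinner : ∀ p ∈ range M, ∑ j ∈ Icc 1 (M-1), t (1+p) (1+(p+j))
            ≤ ∑ j ∈ Icc 1 M, r j := by
          intro p _
          have : ∀ j ∈ Icc 1 (M-1), t (1+p) (1+(p+j)) = r j := by
            intro j _
            rw [ht_gap _ _ (by omega)]
            congr 1
            omega
          rw [Finset.sum_congr rfl this]
          apply Finset.sum_le_sum_of_subset_of_nonneg
          · apply Finset.Icc_subset_Icc_right; omega
          · intro j _ _; exact hr0 j
        calc ∑ p ∈ range M, ∑ j ∈ Icc 1 (M-1), t (1+p) (1+(p+j))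
            ≤ ∑ p ∈ range M, ∑ j ∈ Icc 1 M, r j := Finset.sum_le_sum hinner
          _ = (M:ℝ) * ∑ j ∈ Icc 1 M, r j := by
              rw [Finset.sum_const, nsmul_eq_mul, Finset.card_range]
      linarith
    calc ∫ x, (v x)^2 ∂μ ≤ ∑ l ∈ Icc 1 M, ∑ l' ∈ Icc 1 M, (Cg*Ch)^2 * t l l' := step1
      _ = (Cg*Ch)^2 * ∑ l ∈ Icc 1 M, ∑ l' ∈ Icc 1 M, t l l' := by
          rw [Finset.mul_sum]
          apply Finset.sum_congr rfl
          intro l _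
          rw [Finset.mul_sum]
      _ ≤ _ := by
          apply mul_le_mul_of_nonneg_left step2 (sq_nonneg _)
  -- put it together
  have hM2ε : (M:ℝ) * r 0 + 2 * ((M:ℝ) * ∑ j ∈ Icc 1 M, r j) = (M:ℝ)^2 * ε M := by
    rcases Nat.eq_zero_or_pos M with hM | hM
    · subst hM; simp [hε_def]
    · have hMne : ((M:ℝ)) ≠ 0 := by positivity
      rw [hε_def]
      simp only
      field_simp
  have final : ∑ l ∈ Icc 1 M, (a l)^2 ≤ Cg^2 * (M:ℝ) * (Ch * Real.sqrt (ε M)) := by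
    calc ∑ l ∈ Icc 1 M, (a l)^2 ≤ Cg * ∫ x, |v x| ∂μ := hS_le
      _ ≤ Cg * Real.sqrt (∫ x, (v x)^2 ∂μ) :=
          mul_le_mul_of_nonneg_left hintv_sqrt hCg
      _ ≤ Cg * Real.sqrt ((Cg*Ch)^2 * ((M:ℝ)^2 * ε M)) := by
          apply mul_le_mul_of_nonneg_left _ hCg
          apply Real.sqrt_le_sqrt
          rw [← hM2ε]
          exact hv2_le
      _ = Cg^2 * (M:ℝ) * (Ch * Real.sqrt (ε M)) := by
          rw [Real.sqrt_mul (sq_nonneg _), Real.sqrt_mul (sq_nonneg _),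
            Real.sqrt_sq (mul_nonneg hCg hCh), Real.sqrt_sq (Nat.cast_nonneg M)]
          ring
  exact final

end UL

section VDC
variable {X : Type*} [MeasurableSpace X] {μ : Measure X} {T : X → X}

lemma Icc_one_eq_Ioc (N : ℕ) : Icc 1 N = Ioc 0 N := by
  ext k; simp only [mem_Icc, mem_Ioc]; omega

lemma sum_shift_Icc (N d : ℕ) (f : ℕ → ℝ) :
    ∑ n ∈ Icc 1 N, f (n+d) = ∑ k ∈ Ioc d (N+d), f k := by
  rw [Icc_one_eq_Ioc]
  rw [show Ioc d (N+d) = Ioc (0+d) (N+d) by rw [zero_add], ← Finset.map_add_right_Ioc,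
    Finset.sum_map]
  apply Finset.sum_congr rfl
  intro n _
  simp [addRightEmbedding]

set_option maxHeartbeats 1000000 in
lemma vdc [IsProbabilityMeasure μ] (u : ℕ → X → ℝ) (hum : ∀ n, Measurable (u n))
    {B : ℝ} (hB : ∀ n x, |u n x| ≤ B) (hB0 : 0 ≤ B) {D N : ℕ} (hD : 1 ≤ D) (hDN : D ≤ N) :
    ∫ x, ((1/(N:ℝ)) * ∑ n ∈ Icc 1 N, u n x)^2 ∂μ
      ≤ 2*B^2/(D:ℝ) + 8*B^2*(D:ℝ)^2/(N:ℝ)^2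
        + (4/((D:ℝ)*(N:ℝ))) * ∑ j ∈ Icc 1 (D-1), ∑ k ∈ Icc 1 (N+D),
            |∫ x, u k x * u (k+j) x ∂μ| := by
  have hN1 : 1 ≤ N := le_trans hD hDN
  have hNpos : (0:ℝ) < N := by exact_mod_cast hN1
  have hDpos : (0:ℝ) < D := by exact_mod_cast hD
  set w : ℕ → X → ℝ := fun n x => (1/(D:ℝ)) * ∑ d ∈ range D, u (n+d) x with hw_def
  have hw_meas : ∀ n, Measurable (w n) :=
    fun n => (Finset.measurable_sum _ fun d _ => hum _).const_mul _
  have hw_bdd : ∀ n x, |w n x| ≤ B := by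
    intro n x
    rw [hw_def]
    simp only
    rw [abs_mul, abs_of_pos (by positivity : (0:ℝ) < 1/(D:ℝ))]
    calc (1/(D:ℝ)) * |∑ d ∈ range D, u (n+d) x|
        ≤ (1/(D:ℝ)) * ∑ d ∈ range D, |u (n+d) x| := by
          apply mul_le_mul_of_nonneg_left (Finset.abs_sum_le_sum_abs _ _) (by positivity)
      _ ≤ (1/(D:ℝ)) * ∑ d ∈ range D, B := by
          apply mul_le_mul_of_nonneg_left (Finset.sum_le_sum fun d _ => hB _ _) (by positivity)
      _ = B := by
          rw [Finset.sum_const, nsmul_eq_mul, Finset.card_range]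
          field_simp
  -- Step A : pointwise approximation
  have stepA : ∀ x, |((1/(N:ℝ)) * ∑ n ∈ Icc 1 N, u n x)
      - ((1/(N:ℝ)) * ∑ n ∈ Icc 1 N, w n x)| ≤ 2*B*(D:ℝ)/(N:ℝ) := by
    intro x
    have hSd : ∀ d, d < D → |∑ n ∈ Icc 1 N, u (n+d) x - ∑ n ∈ Icc 1 N, u n x|
        ≤ 2*(D:ℝ)*B := by
      intro d hd
      have hdN : d ≤ N := le_trans (le_of_lt hd) hDN
      have e1 : ∑ n ∈ Icc 1 N, u (n+d) x = ∑ k ∈ Ioc d (N+d), u k x :=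
        sum_shift_Icc N d (fun k => u k x)
      have e2 : ∑ k ∈ Ioc d N, u k x + ∑ k ∈ Ioc N (N+d), u k x
          = ∑ k ∈ Ioc d (N+d), u k x :=
        Finset.sum_Ioc_consecutive _ hdN (Nat.le_add_right N d)
      have e3 : ∑ k ∈ Ioc 0 d, u k x + ∑ k ∈ Ioc d N, u k x = ∑ k ∈ Ioc 0 N, u k x :=
        Finset.sum_Ioc_consecutive _ (Nat.zero_le d) hdN
      have e4 : ∑ n ∈ Icc 1 N, u n x = ∑ k ∈ Ioc 0 N, u k x := by
        rw [Icc_one_eq_Ioc]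
      have hb1 : |∑ k ∈ Ioc N (N+d), u k x| ≤ (d:ℝ) * B := by
        calc |∑ k ∈ Ioc N (N+d), u k x| ≤ ∑ k ∈ Ioc N (N+d), |u k x| :=
              Finset.abs_sum_le_sum_abs _ _
          _ ≤ ∑ k ∈ Ioc N (N+d), B := Finset.sum_le_sum fun k _ => hB _ _
          _ = (d:ℝ) * B := by
              rw [Finset.sum_const, nsmul_eq_mul, Nat.card_Ioc]
              simp
      have hb2 : |∑ k ∈ Ioc 0 d, u k x| ≤ (d:ℝ) * B := by
        calc |∑ k ∈ Ioc 0 d, u k x| ≤ ∑ k ∈ Ioc 0 d, |u k x| :=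
              Finset.abs_sum_le_sum_abs _ _
          _ ≤ ∑ k ∈ Ioc 0 d, B := Finset.sum_le_sum fun k _ => hB _ _
          _ = (d:ℝ) * B := by
              rw [Finset.sum_const, nsmul_eq_mul, Nat.card_Ioc]
              simp
      have hdD : (d:ℝ) ≤ (D:ℝ) := by exact_mod_cast le_of_lt hd
      have e5 : ∑ n ∈ Icc 1 N, u (n+d) x - ∑ n ∈ Icc 1 N, u n x
          = ∑ k ∈ Ioc N (N+d), u k x - ∑ k ∈ Ioc 0 d, u k x := by
        rw [e1, e4, ← e2, ← e3]; ring
      rw [e5]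
      calc |∑ k ∈ Ioc N (N+d), u k x - ∑ k ∈ Ioc 0 d, u k x|
          ≤ |∑ k ∈ Ioc N (N+d), u k x| + |∑ k ∈ Ioc 0 d, u k x| := abs_sub _ _
        _ ≤ (d:ℝ)*B + (d:ℝ)*B := add_le_add hb1 hb2
        _ ≤ 2*(D:ℝ)*B := by nlinarith
    have hsum_w : ∑ n ∈ Icc 1 N, w n x
        = (1/(D:ℝ)) * ∑ d ∈ range D, ∑ n ∈ Icc 1 N, u (n+d) x := by
      calc ∑ n ∈ Icc 1 N, w n x
          = ∑ n ∈ Icc 1 N, (1/(D:ℝ)) * ∑ d ∈ range D, u (n+d) x :=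
            Finset.sum_congr rfl (fun n _ => rfl)
        _ = (1/(D:ℝ)) * ∑ n ∈ Icc 1 N, ∑ d ∈ range D, u (n+d) x := by
            rw [Finset.mul_sum]
        _ = (1/(D:ℝ)) * ∑ d ∈ range D, ∑ n ∈ Icc 1 N, u (n+d) x := by
            rw [Finset.sum_comm]
    have hdiff : ∑ n ∈ Icc 1 N, u n x - ∑ n ∈ Icc 1 N, w n x
        = (1/(D:ℝ)) * ∑ d ∈ range D, (∑ n ∈ Icc 1 N, u n x - ∑ n ∈ Icc 1 N, u (n+d) x) := by
      rw [hsum_w, Finset.sum_sub_distrib, Finset.sum_const, Finset.card_range, mul_sub,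
        nsmul_eq_mul]
      field_simp
    have habs : |∑ n ∈ Icc 1 N, u n x - ∑ n ∈ Icc 1 N, w n x| ≤ 2*(D:ℝ)*B := by
      rw [hdiff, abs_mul, abs_of_pos (by positivity : (0:ℝ) < 1/(D:ℝ))]
      calc (1/(D:ℝ)) * |∑ d ∈ range D, (∑ n ∈ Icc 1 N, u n x - ∑ n ∈ Icc 1 N, u (n+d) x)|
          ≤ (1/(D:ℝ)) * ∑ d ∈ range D,
              |∑ n ∈ Icc 1 N, u n x - ∑ n ∈ Icc 1 N, u (n+d) x| := by
            apply mul_le_mul_of_nonneg_left (Finset.abs_sum_le_sum_abs _ _) (by positivity)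
        _ ≤ (1/(D:ℝ)) * ∑ d ∈ range D, 2*(D:ℝ)*B := by
            apply mul_le_mul_of_nonneg_left ?_ (by positivity)
            apply Finset.sum_le_sum
            intro d hd
            rw [abs_sub_comm]
            exact hSd d (mem_range.mp hd)
        _ = 2*(D:ℝ)*B := by
            rw [Finset.sum_const, nsmul_eq_mul, Finset.card_range]
            field_simp
    calc |((1/(N:ℝ)) * ∑ n ∈ Icc 1 N, u n x) - ((1/(N:ℝ)) * ∑ n ∈ Icc 1 N, w n x)|
        = (1/(N:ℝ)) * |∑ n ∈ Icc 1 N, u n x - ∑ n ∈ Icc 1 N, w n x| := by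
          rw [← mul_sub, abs_mul, abs_of_pos (by positivity : (0:ℝ) < 1/(N:ℝ))]
      _ ≤ (1/(N:ℝ)) * (2*(D:ℝ)*B) := mul_le_mul_of_nonneg_left habs (by positivity)
      _ = 2*B*(D:ℝ)/(N:ℝ) := by ring
  -- Step B : pointwise square bound
  have stepB : ∀ x, ((1/(N:ℝ)) * ∑ n ∈ Icc 1 N, u n x)^2
      ≤ 2*((1/(N:ℝ)) * ∑ n ∈ Icc 1 N, w n x)^2 + 8*B^2*(D:ℝ)^2/(N:ℝ)^2 := by
    intro x
    have he := abs_le.mp (stepA x)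
    have hc2 : (2*B*(D:ℝ)/(N:ℝ))^2 * 2 = 8*B^2*(D:ℝ)^2/(N:ℝ)^2 := by
      field_simp
      ring
    nlinarith [he.1, he.2, sq_nonneg ((1/(N:ℝ)) * ∑ n ∈ Icc 1 N, u n x
      - 2*((1/(N:ℝ)) * ∑ n ∈ Icc 1 N, w n x))]
  -- measurability / boundedness of the averages
  have havg_meas : Measurable (fun x => (1/(N:ℝ)) * ∑ n ∈ Icc 1 N, u n x) :=
    (Finset.measurable_sum _ fun n _ => hum n).const_mul _
  have hwavg_meas : Measurable (fun x => (1/(N:ℝ)) * ∑ n ∈ Icc 1 N, w n x) :=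
    (Finset.measurable_sum _ fun n _ => hw_meas n).const_mul _
  have avg_bdd : ∀ (v : ℕ → X → ℝ), (∀ n x, |v n x| ≤ B) →
      ∀ x, |(1/(N:ℝ)) * ∑ n ∈ Icc 1 N, v n x| ≤ B := by
    intro v hv x
    rw [abs_mul, abs_of_pos (by positivity : (0:ℝ) < 1/(N:ℝ))]
    calc (1/(N:ℝ)) * |∑ n ∈ Icc 1 N, v n x| ≤ (1/(N:ℝ)) * ∑ n ∈ Icc 1 N, |v n x| := by
          apply mul_le_mul_of_nonneg_left (Finset.abs_sum_le_sum_abs _ _) (by positivity)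
      _ ≤ (1/(N:ℝ)) * ∑ n ∈ Icc 1 N, B := by
          apply mul_le_mul_of_nonneg_left (Finset.sum_le_sum fun n _ => hv _ _) (by positivity)
      _ = B := by
          rw [Finset.sum_const, nsmul_eq_mul, Nat.card_Icc]
          simp only [Nat.add_sub_cancel]
          field_simp
  have havg_bdd := avg_bdd u hB
  have hwavg_bdd := avg_bdd w hw_bdd
  have sq_int : ∀ (f : X → ℝ), Measurable f → (∀ x, |f x| ≤ B) →
      Integrable (fun x => (f x)^2) μ := by
    intro f hf hfb
    apply bdd_integrable (hf.pow_const 2) (C := B^2)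
    intro x
    rw [abs_pow]
    exact pow_le_pow_left₀ (abs_nonneg _) (hfb x) 2
  have stepC : ∫ x, ((1/(N:ℝ)) * ∑ n ∈ Icc 1 N, u n x)^2 ∂μ
      ≤ 2 * ∫ x, ((1/(N:ℝ)) * ∑ n ∈ Icc 1 N, w n x)^2 ∂μ + 8*B^2*(D:ℝ)^2/(N:ℝ)^2 := by
    have hint1 := sq_int _ havg_meas havg_bdd
    have hint2 := sq_int _ hwavg_meas hwavg_bdd
    calc ∫ x, ((1/(N:ℝ)) * ∑ n ∈ Icc 1 N, u n x)^2 ∂μ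
        ≤ ∫ x, (2*((1/(N:ℝ)) * ∑ n ∈ Icc 1 N, w n x)^2 + 8*B^2*(D:ℝ)^2/(N:ℝ)^2) ∂μ := by
          apply integral_mono hint1 ((hint2.const_mul 2).add (integrable_const _))
          intro x
          exact stepB x
      _ = 2 * ∫ x, ((1/(N:ℝ)) * ∑ n ∈ Icc 1 N, w n x)^2 ∂μ + 8*B^2*(D:ℝ)^2/(N:ℝ)^2 := by
          rw [integral_add (hint2.const_mul 2) (integrable_const _), integral_const_mul,
            integral_const]
          simp
  have stepD : ∫ x, ((1/(N:ℝ)) * ∑ n ∈ Icc 1 N, w n x)^2 ∂μ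
      ≤ (1/(N:ℝ)) * ∑ n ∈ Icc 1 N, ∫ x, (w n x)^2 ∂μ := by
    have hpt : ∀ x, ((1/(N:ℝ)) * ∑ n ∈ Icc 1 N, w n x)^2
        ≤ (1/(N:ℝ)) * ∑ n ∈ Icc 1 N, (w n x)^2 := by
      intro x
      have hj := sq_sum_le_card (Icc 1 N) (fun n => w n x)
      rw [Nat.card_Icc] at hj
      simp only [Nat.add_sub_cancel] at hj
      have key : ((1:ℝ)/(N:ℝ))^2 * ((N:ℝ) * ∑ n ∈ Icc 1 N, (w n x)^2)
          = (1/(N:ℝ)) * ∑ n ∈ Icc 1 N, (w n x)^2 := by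
        field_simp
      rw [mul_pow]
      calc ((1:ℝ)/(N:ℝ))^2 * (∑ n ∈ Icc 1 N, w n x)^2
          ≤ ((1:ℝ)/(N:ℝ))^2 * ((N:ℝ) * ∑ n ∈ Icc 1 N, (w n x)^2) :=
            mul_le_mul_of_nonneg_left hj (by positivity)
        _ = (1/(N:ℝ)) * ∑ n ∈ Icc 1 N, (w n x)^2 := key
    calc ∫ x, ((1/(N:ℝ)) * ∑ n ∈ Icc 1 N, w n x)^2 ∂μ
        ≤ ∫ x, ((1/(N:ℝ)) * ∑ n ∈ Icc 1 N, (w n x)^2) ∂μ := by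
          apply integral_mono (sq_int _ hwavg_meas hwavg_bdd)
          · exact (integrable_finset_sum _
              (fun n _ => sq_int _ (hw_meas n) (hw_bdd n))).const_mul _
          intro x
          exact hpt x
      _ = (1/(N:ℝ)) * ∑ n ∈ Icc 1 N, ∫ x, (w n x)^2 ∂μ := by
          rw [integral_const_mul,
            integral_finset_sum _ (fun n _ => sq_int _ (hw_meas n) (hw_bdd n))]
  -- Step E : expand ∫ w_n²
  have uu_int : ∀ a b : ℕ, Integrable (fun x => u a x * u b x) μ := by
    intro a b
    apply bdd_integrable ((hum a).mul (hum b)) (C := B*B)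
    intro x
    simp only [Pi.mul_apply]; rw [abs_mul]
    exact mul_le_mul (hB _ _) (hB _ _) (abs_nonneg _) hB0
  have tB : ∀ a b : ℕ, |∫ x, u a x * u b x ∂μ| ≤ B^2 :=
    fun a b => abs_int_le ((hum a).mul (hum b)) (fun x => by
      simp only [Pi.mul_apply]; rw [abs_mul, sq]
      exact mul_le_mul (hB _ _) (hB _ _) (abs_nonneg _) hB0)
  have stepE : ∀ n : ℕ, ∫ x, (w n x)^2 ∂μ
      ≤ B^2/(D:ℝ) + (2/(D:ℝ)^2) * ∑ d ∈ range D, ∑ j ∈ Icc 1 (D-1),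
          |∫ x, u (n+d) x * u (n+(d+j)) x ∂μ| := by
    intro n
    have hexp : ∫ x, (w n x)^2 ∂μ
        = (1/(D:ℝ))^2 * ∑ d ∈ range D, ∑ d' ∈ range D, ∫ x, u (n+d) x * u (n+d') x ∂μ := by
      have e1 : (fun x => (w n x)^2)
          = fun x => (1/(D:ℝ))^2 * ∑ d ∈ range D, ∑ d' ∈ range D, u (n+d) x * u (n+d') x := by
        funext x
        show ((1/(D:ℝ)) * ∑ d ∈ range D, u (n+d) x)^2 = _
        rw [mul_pow]
        congr 1
        rw [sq, Finset.sum_mul_sum]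
      rw [e1, integral_const_mul, integral_finset_sum _ (fun d _ =>
        integrable_finset_sum _ (fun d' _ => uu_int _ _))]
      congr 1
      apply Finset.sum_congr rfl
      intro d _
      rw [integral_finset_sum _ (fun d' _ => uu_int _ _)]
    have habs : ∫ x, (w n x)^2 ∂μ
        ≤ (1/(D:ℝ))^2 * ∑ d ∈ range D, ∑ d' ∈ range D,
            |∫ x, u (n+d) x * u (n+d') x ∂μ| := by
      rw [hexp]
      apply mul_le_mul_of_nonneg_left ?_ (by positivity)
      exact Finset.sum_le_sum fun d _ => Finset.sum_le_sum fun d' _ => le_abs_self _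
    have hsq := square_sum_le D (fun d d' => |∫ x, u (n+d) x * u (n+d') x ∂μ|)
      (fun d d' => abs_nonneg _) (fun d d' => by
        have e : (fun x => u (n+d) x * u (n+d') x) = fun x => u (n+d') x * u (n+d) x :=
          funext fun x => mul_comm _ _
        rw [e])
    have hdiag : ∑ d ∈ range D, |∫ x, u (n+d) x * u (n+d) x ∂μ| ≤ (D:ℝ) * B^2 := by
      calc ∑ d ∈ range D, |∫ x, u (n+d) x * u (n+d) x ∂μ|
          ≤ ∑ d ∈ range D, B^2 := Finset.sum_le_sum fun d _ => tB _ _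
        _ = (D:ℝ) * B^2 := by rw [Finset.sum_const, nsmul_eq_mul, Finset.card_range]
    have halg1 : (1/(D:ℝ))^2 * ((D:ℝ) * B^2) = B^2/(D:ℝ) := by
      field_simp
    have halg2 : ∀ S : ℝ, (1/(D:ℝ))^2 * (2 * S) = (2/(D:ℝ)^2) * S := by
      intro S
      field_simp
    calc ∫ x, (w n x)^2 ∂μ
        ≤ (1/(D:ℝ))^2 * ∑ d ∈ range D, ∑ d' ∈ range D,
            |∫ x, u (n+d) x * u (n+d') x ∂μ| := habs
      _ ≤ (1/(D:ℝ))^2 * ((D:ℝ) * B^2 + 2 * ∑ d ∈ range D, ∑ j ∈ Icc 1 (D-1),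
            |∫ x, u (n+d) x * u (n+(d+j)) x ∂μ|) := by
          apply mul_le_mul_of_nonneg_left ?_ (by positivity)
          apply le_trans hsq
          exact add_le_add hdiag le_rfl
      _ = B^2/(D:ℝ) + (2/(D:ℝ)^2) * ∑ d ∈ range D, ∑ j ∈ Icc 1 (D-1),
            |∫ x, u (n+d) x * u (n+(d+j)) x ∂μ| := by
          rw [mul_add, halg1, halg2]
  -- Step F : reindex the correlation sums
  have stepF : ∑ n ∈ Icc 1 N, ∑ d ∈ range D, ∑ j ∈ Icc 1 (D-1),
        |∫ x, u (n+d) x * u (n+(d+j)) x ∂μ|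
      ≤ (D:ℝ) * ∑ j ∈ Icc 1 (D-1), ∑ k ∈ Icc 1 (N+D), |∫ x, u k x * u (k+j) x ∂μ| := by
    have swap1 : ∑ n ∈ Icc 1 N, ∑ d ∈ range D, ∑ j ∈ Icc 1 (D-1),
          |∫ x, u (n+d) x * u (n+(d+j)) x ∂μ|
        = ∑ d ∈ range D, ∑ j ∈ Icc 1 (D-1), ∑ n ∈ Icc 1 N,
          |∫ x, u (n+d) x * u (n+(d+j)) x ∂μ| := by
      rw [Finset.sum_comm]
      apply Finset.sum_congr rfl
      intro d _
      rw [Finset.sum_comm]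
    rw [swap1]
    have hinner : ∀ d ∈ range D, ∑ j ∈ Icc 1 (D-1), ∑ n ∈ Icc 1 N,
          |∫ x, u (n+d) x * u (n+(d+j)) x ∂μ|
        ≤ ∑ j ∈ Icc 1 (D-1), ∑ k ∈ Icc 1 (N+D), |∫ x, u k x * u (k+j) x ∂μ| := by
      intro d hd
      apply Finset.sum_le_sum
      intro j _
      have e1 : ∑ n ∈ Icc 1 N, |∫ x, u (n+d) x * u (n+(d+j)) x ∂μ|
          = ∑ k ∈ Ioc d (N+d), |∫ x, u k x * u (k+j) x ∂μ| := by
        have e0 : ∀ n ∈ Icc 1 N, |∫ x, u (n+d) x * u (n+(d+j)) x ∂μ|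
            = (fun k => |∫ x, u k x * u (k+j) x ∂μ|) (n+d) := by
          intro n _
          rw [show n+(d+j) = n+d+j from by omega]
        rw [Finset.sum_congr rfl e0]
        exact sum_shift_Icc N d (fun k => |∫ x, u k x * u (k+j) x ∂μ|)
      rw [e1]
      apply Finset.sum_le_sum_of_subset_of_nonneg
      · intro k hk
        rw [mem_Ioc] at hk
        rw [mem_Icc]
        obtain ⟨hk1, hk2⟩ := hk
        have hdD : d < D := mem_range.mp hd
        omega
      · intro k _ _
        exact abs_nonneg _
    calc ∑ d ∈ range D, ∑ j ∈ Icc 1 (D-1), ∑ n ∈ Icc 1 N,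
          |∫ x, u (n+d) x * u (n+(d+j)) x ∂μ|
        ≤ ∑ d ∈ range D, ∑ j ∈ Icc 1 (D-1), ∑ k ∈ Icc 1 (N+D),
          |∫ x, u k x * u (k+j) x ∂μ| := Finset.sum_le_sum hinner
      _ = (D:ℝ) * ∑ j ∈ Icc 1 (D-1), ∑ k ∈ Icc 1 (N+D), |∫ x, u k x * u (k+j) x ∂μ| := by
          rw [Finset.sum_const, nsmul_eq_mul, Finset.card_range]
  -- assemble everything
  set S := ∑ j ∈ Icc 1 (D-1), ∑ k ∈ Icc 1 (N+D), |∫ x, u k x * u (k+j) x ∂μ| with hS_def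
  have hS0 : (0:ℝ) ≤ S :=
    Finset.sum_nonneg fun j _ => Finset.sum_nonneg fun k _ => abs_nonneg _
  set Q := ∑ n ∈ Icc 1 N, ∑ d ∈ range D, ∑ j ∈ Icc 1 (D-1),
      |∫ x, u (n+d) x * u (n+(d+j)) x ∂μ| with hQ_def
  have hQ0 : (0:ℝ) ≤ Q :=
    Finset.sum_nonneg fun n _ => Finset.sum_nonneg fun d _ =>
      Finset.sum_nonneg fun j _ => abs_nonneg _
  have hcardN : (((Icc 1 N).card : ℕ) : ℝ) = (N:ℝ) := by
    rw [Nat.card_Icc]; simp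
  have hEsum : ∑ n ∈ Icc 1 N, ∫ x, (w n x)^2 ∂μ
      ≤ (N:ℝ) * (B^2/(D:ℝ)) + (2/(D:ℝ)^2) * Q := by
    calc ∑ n ∈ Icc 1 N, ∫ x, (w n x)^2 ∂μ
        ≤ ∑ n ∈ Icc 1 N, (B^2/(D:ℝ) + (2/(D:ℝ)^2) * ∑ d ∈ range D, ∑ j ∈ Icc 1 (D-1),
            |∫ x, u (n+d) x * u (n+(d+j)) x ∂μ|) := Finset.sum_le_sum fun n _ => stepE n
      _ = (N:ℝ) * (B^2/(D:ℝ)) + (2/(D:ℝ)^2) * Q := by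
          rw [Finset.sum_add_distrib, Finset.sum_const, nsmul_eq_mul, hcardN, ← Finset.mul_sum,
            hQ_def]
  have hmain : (1/(N:ℝ)) * ∑ n ∈ Icc 1 N, ∫ x, (w n x)^2 ∂μ
      ≤ B^2/(D:ℝ) + (2/((D:ℝ)*(N:ℝ))) * S := by
    have h2 : Q ≤ (D:ℝ) * S := stepF
    have h1 : (1/(N:ℝ)) * ∑ n ∈ Icc 1 N, ∫ x, (w n x)^2 ∂μ
        ≤ (1/(N:ℝ)) * ((N:ℝ) * (B^2/(D:ℝ)) + (2/(D:ℝ)^2) * ((D:ℝ) * S)) := by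
      apply mul_le_mul_of_nonneg_left ?_ (by positivity)
      apply le_trans hEsum
      apply add_le_add_right
      exact mul_le_mul_of_nonneg_left h2 (by positivity)
    apply le_trans h1
    apply le_of_eq
    field_simp
  calc ∫ x, ((1/(N:ℝ)) * ∑ n ∈ Icc 1 N, u n x)^2 ∂μ
      ≤ 2 * ∫ x, ((1/(N:ℝ)) * ∑ n ∈ Icc 1 N, w n x)^2 ∂μ + 8*B^2*(D:ℝ)^2/(N:ℝ)^2 := stepC
    _ ≤ 2 * ((1/(N:ℝ)) * ∑ n ∈ Icc 1 N, ∫ x, (w n x)^2 ∂μ) + 8*B^2*(D:ℝ)^2/(N:ℝ)^2 := by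
        linarith [stepD]
    _ ≤ 2 * (B^2/(D:ℝ) + (2/((D:ℝ)*(N:ℝ))) * S) + 8*B^2*(D:ℝ)^2/(N:ℝ)^2 := by
        linarith [hmain]
    _ = 2*B^2/(D:ℝ) + 8*B^2*(D:ℝ)^2/(N:ℝ)^2 + (4/((D:ℝ)*(N:ℝ))) * S := by
        field_simp
        ring

end VDC

section SINGLE
variable {X : Type*} [MeasurableSpace X] {μ : Measure X} {T : X → X}

lemma avg_bdd_gen {g : ℕ → X → ℝ} {C : ℝ} (hC : 0 ≤ C) (hb : ∀ n x, |g n x| ≤ C)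
    (N : ℕ) (x : X) : |(1/(N:ℝ)) * ∑ n ∈ Icc 1 N, g n x| ≤ C := by
  rcases Nat.eq_zero_or_pos N with h | h
  · subst h; simpa using hC
  have hNpos : (0:ℝ) < N := by exact_mod_cast h
  rw [abs_mul, abs_of_pos (by positivity : (0:ℝ) < 1/(N:ℝ))]
  calc (1/(N:ℝ)) * |∑ n ∈ Icc 1 N, g n x| ≤ (1/(N:ℝ)) * ∑ n ∈ Icc 1 N, |g n x| :=
        mul_le_mul_of_nonneg_left (Finset.abs_sum_le_sum_abs _ _) (by positivity)
    _ ≤ (1/(N:ℝ)) * ∑ n ∈ Icc 1 N, C :=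
        mul_le_mul_of_nonneg_left (Finset.sum_le_sum fun n _ => hb n x) (by positivity)
    _ = C := by
        rw [Finset.sum_const, nsmul_eq_mul, Nat.card_Icc]
        simp only [Nat.add_sub_cancel]
        field_simp

lemma avg_le_sqrt_avg {q : ℕ → ℝ} (hq : ∀ m, 0 ≤ q m) (N : ℕ) :
    (1/(N:ℝ)) * ∑ m ∈ Icc 1 N, Real.sqrt (q m)
      ≤ Real.sqrt ((1/(N:ℝ)) * ∑ m ∈ Icc 1 N, q m) := by
  rcases Nat.eq_zero_or_pos N with h | h
  · subst h; simp
  have hNpos : (0:ℝ) < N := by exact_mod_cast h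
  have hL0 : 0 ≤ (1/(N:ℝ)) * ∑ m ∈ Icc 1 N, Real.sqrt (q m) := by
    apply mul_nonneg (by positivity) (Finset.sum_nonneg fun m _ => Real.sqrt_nonneg _)
  rw [show (1/(N:ℝ)) * ∑ m ∈ Icc 1 N, Real.sqrt (q m)
      = Real.sqrt (((1/(N:ℝ)) * ∑ m ∈ Icc 1 N, Real.sqrt (q m))^2) from
    (Real.sqrt_sq hL0).symm]
  apply Real.sqrt_le_sqrt
  have hcs := sq_sum_le_card (Icc 1 N) (fun m => Real.sqrt (q m))
  rw [Nat.card_Icc] at hcs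
  simp only [Nat.add_sub_cancel] at hcs
  have hsq : ∀ m ∈ Icc 1 N, Real.sqrt (q m) ^ 2 = q m := by
    intro m _
    rw [Real.sq_sqrt (hq m)]
  rw [Finset.sum_congr rfl hsq] at hcs
  rw [mul_pow]
  calc (1/(N:ℝ))^2 * (∑ m ∈ Icc 1 N, Real.sqrt (q m))^2
      ≤ (1/(N:ℝ))^2 * ((N:ℝ) * ∑ m ∈ Icc 1 N, q m) :=
        mul_le_mul_of_nonneg_left hcs (by positivity)
    _ = (1/(N:ℝ)) * ∑ m ∈ Icc 1 N, q m := by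
        field_simp

lemma corr_sq_bound [IsProbabilityMeasure μ] (hT : MeasurePreserving T μ μ) {φ : X → ℝ}
    (hφ : Measurable φ) {C : ℝ} (hbφ : ∀ x, |φ x| ≤ C) (hC : 0 ≤ C) (N : ℕ) (hN : 1 ≤ N) :
    ∫ x, ((1/(N:ℝ)) * ∑ n ∈ Icc 1 N, φ (T^[n] x))^2 ∂μ
      ≤ C^2/(N:ℝ) + 2*((1/(N:ℝ)) * ∑ j ∈ Icc 1 N, |∫ x, φ x * φ (T^[j] x) ∂μ|) := by
  have hNpos : (0:ℝ) < N := by exact_mod_cast hN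
  have hmeas : ∀ n : ℕ, Measurable (fun x => φ (T^[n] x)) :=
    fun n => hφ.comp (hT.measurable.iterate n)
  have hint : ∀ n n' : ℕ, Integrable (fun x => φ (T^[n] x) * φ (T^[n'] x)) μ := by
    intro n n'
    apply bdd_integrable ((hmeas n).mul (hmeas n')) (C := C*C)
    intro x
    simp only [Pi.mul_apply]; rw [abs_mul]
    exact mul_le_mul (hbφ _) (hbφ _) (abs_nonneg _) hC
  have hexp : ∫ x, ((1/(N:ℝ)) * ∑ n ∈ Icc 1 N, φ (T^[n] x))^2 ∂μ
      = (1/(N:ℝ))^2 * ∑ n ∈ Icc 1 N, ∑ n' ∈ Icc 1 N, ∫ x, φ (T^[n] x) * φ (T^[n'] x) ∂μ := by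
    have e1 : (fun x => ((1/(N:ℝ)) * ∑ n ∈ Icc 1 N, φ (T^[n] x))^2)
        = fun x => (1/(N:ℝ))^2 * ∑ n ∈ Icc 1 N, ∑ n' ∈ Icc 1 N,
            φ (T^[n] x) * φ (T^[n'] x) := by
      funext x
      rw [mul_pow]
      congr 1
      rw [sq, Finset.sum_mul_sum]
    rw [e1, integral_const_mul, integral_finset_sum _ (fun n _ =>
      integrable_finset_sum _ (fun n' _ => hint _ _))]
    congr 1
    apply Finset.sum_congr rfl
    intro n _
    rw [integral_finset_sum _ (fun n' _ => hint _ _)]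
  set r : ℕ → ℝ := fun j => |∫ x, φ x * φ (T^[j] x) ∂μ| with hr_def
  have hr0 : ∀ j, 0 ≤ r j := fun j => abs_nonneg _
  have ht_gap : ∀ l l', l ≤ l' → |∫ x, φ (T^[l] x) * φ (T^[l'] x) ∂μ| = r (l' - l) := by
    intro l l' hll'
    show _ = |∫ x, φ x * φ (T^[l'-l] x) ∂μ|
    rw [corr_gap hT hφ hbφ hll']
  have ht_sym : ∀ l l', |∫ x, φ (T^[l] x) * φ (T^[l'] x) ∂μ|
      = |∫ x, φ (T^[l'] x) * φ (T^[l] x) ∂μ| := by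
    intro l l'
    have e : (fun x => φ (T^[l] x) * φ (T^[l'] x)) = fun x => φ (T^[l'] x) * φ (T^[l] x) :=
      funext fun x => mul_comm _ _
    rw [e]
  have hr0C : r 0 ≤ C^2 := by
    apply abs_int_le (hφ.mul (hφ.comp (hT.measurable.iterate 0)))
    intro x
    simp only [Pi.mul_apply]; rw [abs_mul, sq]
    exact mul_le_mul (hbφ _) (hbφ _) (abs_nonneg _) hC
  have step2 : ∑ l ∈ Icc 1 N, ∑ l' ∈ Icc 1 N, |∫ x, φ (T^[l] x) * φ (T^[l'] x) ∂μ|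
      ≤ (N:ℝ) * r 0 + 2 * ((N:ℝ) * ∑ j ∈ Icc 1 N, r j) := by
    have hreix : ∑ l ∈ Icc 1 N, ∑ l' ∈ Icc 1 N, |∫ x, φ (T^[l] x) * φ (T^[l'] x) ∂μ|
        = ∑ p ∈ range N, ∑ q ∈ range N, |∫ x, φ (T^[1+p] x) * φ (T^[1+q] x) ∂μ| := by
      rw [show Icc 1 N = Ico 1 (N+1) by rw [Finset.Ico_add_one_right_eq_Icc], Finset.sum_Ico_eq_sum_range]
      simp only [Nat.add_sub_cancel]
      apply Finset.sum_congr rfl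
      intro p _
      rw [Finset.sum_Ico_eq_sum_range]
      simp only [Nat.add_sub_cancel]
    rw [hreix]
    have hsq := square_sum_le N (fun p q => |∫ x, φ (T^[1+p] x) * φ (T^[1+q] x) ∂μ|)
      (fun p q => abs_nonneg _) (fun p q => ht_sym _ _)
    have hdiag : ∑ p ∈ range N, |∫ x, φ (T^[1+p] x) * φ (T^[1+p] x) ∂μ| = (N:ℝ) * r 0 := by
      have he : ∀ p ∈ range N, |∫ x, φ (T^[1+p] x) * φ (T^[1+p] x) ∂μ| = r 0 := by
        intro p _
        rw [ht_gap _ _ le_rfl]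
        simp
      rw [Finset.sum_congr rfl he, Finset.sum_const, nsmul_eq_mul, Finset.card_range]
    have hoff : ∑ p ∈ range N, ∑ j ∈ Icc 1 (N-1), |∫ x, φ (T^[1+p] x) * φ (T^[1+(p+j)] x) ∂μ|
        ≤ (N:ℝ) * ∑ j ∈ Icc 1 N, r j := by
      have hin : ∀ p ∈ range N, ∑ j ∈ Icc 1 (N-1), |∫ x, φ (T^[1+p] x) * φ (T^[1+(p+j)] x) ∂μ|
          ≤ ∑ j ∈ Icc 1 N, r j := by
        intro p _
        have he : ∀ j ∈ Icc 1 (N-1), |∫ x, φ (T^[1+p] x) * φ (T^[1+(p+j)] x) ∂μ| = r j := by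
          intro j _
          rw [ht_gap _ _ (by omega)]
          congr 1
          omega
        rw [Finset.sum_congr rfl he]
        apply Finset.sum_le_sum_of_subset_of_nonneg
        · apply Finset.Icc_subset_Icc_right; omega
        · intro j _ _; exact hr0 j
      calc ∑ p ∈ range N, ∑ j ∈ Icc 1 (N-1), |∫ x, φ (T^[1+p] x) * φ (T^[1+(p+j)] x) ∂μ|
          ≤ ∑ p ∈ range N, ∑ j ∈ Icc 1 N, r j := Finset.sum_le_sum hin
        _ = (N:ℝ) * ∑ j ∈ Icc 1 N, r j := by
            rw [Finset.sum_const, nsmul_eq_mul, Finset.card_range]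
    linarith
  have habs : ∫ x, ((1/(N:ℝ)) * ∑ n ∈ Icc 1 N, φ (T^[n] x))^2 ∂μ
      ≤ (1/(N:ℝ))^2 * ∑ l ∈ Icc 1 N, ∑ l' ∈ Icc 1 N,
          |∫ x, φ (T^[l] x) * φ (T^[l'] x) ∂μ| := by
    rw [hexp]
    apply mul_le_mul_of_nonneg_left ?_ (by positivity)
    exact Finset.sum_le_sum fun l _ => Finset.sum_le_sum fun l' _ => le_abs_self _
  calc ∫ x, ((1/(N:ℝ)) * ∑ n ∈ Icc 1 N, φ (T^[n] x))^2 ∂μ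
      ≤ (1/(N:ℝ))^2 * ∑ l ∈ Icc 1 N, ∑ l' ∈ Icc 1 N,
          |∫ x, φ (T^[l] x) * φ (T^[l'] x) ∂μ| := habs
    _ ≤ (1/(N:ℝ))^2 * ((N:ℝ) * r 0 + 2 * ((N:ℝ) * ∑ j ∈ Icc 1 N, r j)) :=
        mul_le_mul_of_nonneg_left step2 (by positivity)
    _ ≤ (1/(N:ℝ))^2 * ((N:ℝ) * C^2 + 2 * ((N:ℝ) * ∑ j ∈ Icc 1 N, r j)) := by
        apply mul_le_mul_of_nonneg_left ?_ (by positivity)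
        apply add_le_add_left
        exact mul_le_mul_of_nonneg_left hr0C (by positivity)
    _ = C^2/(N:ℝ) + 2*((1/(N:ℝ)) * ∑ j ∈ Icc 1 N, r j) := by
        field_simp

lemma single_avg [IsProbabilityMeasure μ] (hT : WeaklyMixing μ T) {f : X → ℝ}
    (hf : Measurable f) {C : ℝ} (hbf : ∀ x, |f x| ≤ C) (hC : 0 ≤ C) :
    Tendsto (fun N : ℕ =>
      ∫ x, |(1/(N:ℝ)) * ∑ n ∈ Icc 1 N, f (T^[n] x) - ∫ y, f y ∂μ| ∂μ) atTop (nhds 0) := by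
  set c := ∫ y, f y ∂μ with hc_def
  set φ : X → ℝ := fun x => f x - c with hφ_def
  have hφm : Measurable φ := hf.sub measurable_const
  have hcC : |c| ≤ C := abs_int_le hf hbf
  have hbφ : ∀ x, |φ x| ≤ 2*C := by
    intro x
    calc |φ x| ≤ |f x| + |c| := abs_sub _ _
      _ ≤ 2*C := by have := hbf x; linarith
  have hr : Tendsto (fun N : ℕ => (1/(N:ℝ)) * ∑ j ∈ Icc 1 N,
      |∫ x, φ x * φ (T^[j] x) ∂μ|) atTop (nhds 0) := by
    have hφ0 : ∫ x, φ x ∂μ = 0 := by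
      rw [hφ_def]
      rw [integral_sub (bdd_integrable hf hbf) (integrable_const _), integral_const]
      simp [← hc_def]
    have := fwm hT hφm hbφ hφm hbφ
    rw [hφ0] at this
    simpa using this
  apply tendsto_of_approx
  · intro N
    exact integral_nonneg fun x => abs_nonneg _
  intro ε hε
  refine ⟨fun N => Real.sqrt ((2*C)^2/(N:ℝ)
    + 2*((1/(N:ℝ)) * ∑ j ∈ Icc 1 N, |∫ x, φ x * φ (T^[j] x) ∂μ|)), ?_, ?_⟩
  · have h1 : Tendsto (fun N : ℕ => (2*C)^2/(N:ℝ)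
        + 2*((1/(N:ℝ)) * ∑ j ∈ Icc 1 N, |∫ x, φ x * φ (T^[j] x) ∂μ|)) atTop (nhds 0) := by
      have h2 := hr.const_mul 2
      rw [mul_zero] at h2
      have := (const_div_tendsto ((2*C)^2)).add h2
      rw [add_zero] at this
      exact this
    have := h1.sqrt
    simpa using this
  filter_upwards [Filter.eventually_ge_atTop 1] with N hN
  have hNpos : (0:ℝ) < N := by exact_mod_cast hN
  have heq : ∀ x, (1/(N:ℝ)) * ∑ n ∈ Icc 1 N, f (T^[n] x) - c
      = (1/(N:ℝ)) * ∑ n ∈ Icc 1 N, φ (T^[n] x) := by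
    intro x
    have : ∑ n ∈ Icc 1 N, φ (T^[n] x) = (∑ n ∈ Icc 1 N, f (T^[n] x)) - (N:ℝ) * c := by
      rw [hφ_def]
      rw [Finset.sum_sub_distrib, Finset.sum_const, nsmul_eq_mul, Nat.card_Icc]
      simp only [Nat.add_sub_cancel]
    rw [this, mul_sub]
    have : (1/(N:ℝ)) * ((N:ℝ) * c) = c := by field_simp
    rw [this]
  have hbavg : ∀ x, |(1/(N:ℝ)) * ∑ n ∈ Icc 1 N, φ (T^[n] x)| ≤ 2*C :=
    fun x => avg_bdd_gen (by linarith) (fun n x => hbφ _) N x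
  have havgm : Measurable (fun x => (1/(N:ℝ)) * ∑ n ∈ Icc 1 N, φ (T^[n] x)) :=
    (Finset.measurable_sum _ fun n _ => hφm.comp (hT.1.measurable.iterate n)).const_mul _
  calc ∫ x, |(1/(N:ℝ)) * ∑ n ∈ Icc 1 N, f (T^[n] x) - c| ∂μ
      = ∫ x, |(1/(N:ℝ)) * ∑ n ∈ Icc 1 N, φ (T^[n] x)| ∂μ := by
        apply integral_congr_ae
        apply ae_of_all
        intro x
        show |1 / (N:ℝ) * ∑ n ∈ Icc 1 N, f (T^[n] x) - c| = _
        rw [heq x]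
    _ ≤ Real.sqrt (∫ x, ((1/(N:ℝ)) * ∑ n ∈ Icc 1 N, φ (T^[n] x))^2 ∂μ) :=
        int_abs_le_sqrt havgm hbavg
    _ ≤ Real.sqrt ((2*C)^2/(N:ℝ)
        + 2*((1/(N:ℝ)) * ∑ j ∈ Icc 1 N, |∫ x, φ x * φ (T^[j] x) ∂μ|)) := by
        apply Real.sqrt_le_sqrt
        exact corr_sq_bound hT.1 hφm hbφ (by linarith) N hN
    _ ≤ _ + ε := by linarith

end SINGLE

section MAINEST
variable {X : Type*} [MeasurableSpace X] {μ : Measure X}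

set_option maxHeartbeats 1600000 in
lemma QQ_tendsto [IsProbabilityMeasure μ] {T₁ T₃ : X → X} (hT₁m : Measurable T₁)
    (hT₃ : WeaklyMixing μ T₃) {f₁ ψ : X → ℝ} (hf₁ : Measurable f₁) {C₁ : ℝ}
    (hb₁ : ∀ x, |f₁ x| ≤ C₁) (hC₁ : 0 ≤ C₁) (hψ : Measurable ψ) {Cψ : ℝ}
    (hbψ : ∀ x, |ψ x| ≤ Cψ) (hCψ : 0 ≤ Cψ) (hψ0 : ∫ x, ψ x ∂μ = 0) :
    Tendsto (fun N : ℕ => (1/(N:ℝ)) * ∑ m ∈ Icc 1 N,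
      ∫ x, ((1/(N:ℝ)) * ∑ n ∈ Icc 1 N, f₁ (T₁^[n] x) * ψ (T₃^[n+m] x))^2 ∂μ)
      atTop (nhds 0) := by
  classical
  have hT₃m : Measurable T₃ := hT₃.1.measurable
  set Bu : ℝ := C₁ * Cψ with hBu_def
  have hBu0 : 0 ≤ Bu := mul_nonneg hC₁ hCψ
  set u : ℕ → ℕ → X → ℝ := fun m n x => f₁ (T₁^[n] x) * ψ (T₃^[n+m] x) with hu_def
  have hu_meas : ∀ m n, Measurable (u m n) :=
    fun m n => (hf₁.comp (hT₁m.iterate n)).mul (hψ.comp (hT₃m.iterate (n+m)))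
  have hu_bdd : ∀ m n x, |u m n x| ≤ Bu := by
    intro m n x
    rw [hu_def]
    simp only
    rw [abs_mul]
    exact mul_le_mul (hb₁ _) (hbψ _) (abs_nonneg _) hC₁
  set r3 : ℕ → ℝ := fun j => |∫ x, ψ x * ψ (T₃^[j] x) ∂μ| with hr3_def
  have hr30 : ∀ j, 0 ≤ r3 j := fun j => abs_nonneg _
  have hr3 : Tendsto (fun N : ℕ => (1/(N:ℝ)) * ∑ j ∈ Icc 1 N, r3 j) atTop (nhds 0) := by
    have := fwm hT₃ hψ hbψ hψ hbψ
    rw [hψ0] at this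
    simpa using this
  set G : ℕ → X → ℝ := fun j x => f₁ x * f₁ (T₁^[j] x) with hG_def
  have hG_meas : ∀ j, Measurable (G j) := fun j => hf₁.mul (hf₁.comp (hT₁m.iterate j))
  have hG_bdd : ∀ j x, |G j x| ≤ C₁^2 := by
    intro j x
    rw [hG_def]
    simp only
    rw [abs_mul, sq]
    exact mul_le_mul (hb₁ _) (hb₁ _) (abs_nonneg _) hC₁
  set Ψ : ℕ → X → ℝ := fun j x => ψ x * ψ (T₃^[j] x) with hΨ_def
  have hΨ_meas : ∀ j, Measurable (Ψ j) := fun j => hψ.mul (hψ.comp (hT₃m.iterate j))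
  have hΨ_bdd : ∀ j x, |Ψ j x| ≤ Cψ^2 := by
    intro j x
    rw [hΨ_def]
    simp only
    rw [abs_mul, sq]
    exact mul_le_mul (hbψ _) (hbψ _) (abs_nonneg _) hCψ
  set cΨ : ℕ → ℝ := fun j => ∫ x, Ψ j x ∂μ with hcΨ_def
  have hcΨ_bdd : ∀ j, |cΨ j| ≤ Cψ^2 := fun j => abs_int_le (hΨ_meas j) (hΨ_bdd j)
  have hr3c : ∀ j, r3 j = |cΨ j| := fun j => rfl
  set Ψt : ℕ → X → ℝ := fun j x => Ψ j x - cΨ j with hΨt_def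
  have hΨt_meas : ∀ j, Measurable (Ψt j) := fun j => (hΨ_meas j).sub measurable_const
  have hΨt_bdd : ∀ j x, |Ψt j x| ≤ 2*Cψ^2 := by
    intro j x
    calc |Ψt j x| ≤ |Ψ j x| + |cΨ j| := abs_sub _ _
      _ ≤ 2*Cψ^2 := by have := hΨ_bdd j x; have := hcΨ_bdd j; linarith
  have hΨt0 : ∀ j, ∫ x, Ψt j x ∂μ = 0 := by
    intro j
    rw [hΨt_def]
    simp only
    rw [integral_sub (bdd_integrable (hΨ_meas j) (hΨ_bdd j)) (integrable_const _),
      integral_const]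
    simp [hcΨ_def]
  have hUL : ∀ j : ℕ, ∃ δ : ℕ → ℝ, (∀ M, 0 ≤ δ M) ∧ Tendsto δ atTop (nhds 0) ∧
      ∀ (M : ℕ) (g : X → ℝ) (Cg : ℝ), Measurable g → (∀ x, |g x| ≤ Cg) → 0 ≤ Cg →
        ∑ l ∈ Icc 1 M, (∫ x, g x * Ψt j (T₃^[l] x) ∂μ)^2 ≤ Cg^2 * (M:ℝ) * δ M :=
    fun j => UL hT₃ (hΨt_meas j) (hΨt_bdd j) (by positivity) (hΨt0 j)
  choose δ hδ using hUL
  -- correlation identity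
  have hcorr : ∀ m k j : ℕ, ∫ x, u m k x * u m (k+j) x ∂μ
      = ∫ x, G j (T₁^[k] x) * Ψ j (T₃^[k+m] x) ∂μ := by
    intro m k j
    congr 1
    funext x
    show (f₁ (T₁^[k] x) * ψ (T₃^[k+m] x)) * (f₁ (T₁^[k+j] x) * ψ (T₃^[k+j+m] x))
        = (f₁ (T₁^[k] x) * f₁ (T₁^[j] (T₁^[k] x))) * (ψ (T₃^[k+m] x) * ψ (T₃^[j] (T₃^[k+m] x)))
    rw [← Function.iterate_add_apply T₁ j k x, ← Function.iterate_add_apply T₃ j (k+m) x,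
      show j+k = k+j from by omega, show j+(k+m) = k+j+m from by omega]
    ring
  -- the averaged correlation bound
  have Rb : ∀ (j k N : ℕ), 1 ≤ N → k ≤ 2*N →
      (1/(N:ℝ)) * ∑ m ∈ Icc 1 N, |∫ x, G j (T₁^[k] x) * Ψ j (T₃^[k+m] x) ∂μ|
        ≤ C₁^2 * r3 j + Real.sqrt (3 * C₁^4 * δ j (k+N)) := by
    intro j k N hN hk
    have hNpos : (0:ℝ) < N := by exact_mod_cast hN
    set g : X → ℝ := fun x => G j (T₁^[k] x) with hg_def
    have hg_meas : Measurable g := (hG_meas j).comp (hT₁m.iterate k)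
    have hg_bdd : ∀ x, |g x| ≤ C₁^2 := fun x => hG_bdd j _
    have hgint : |∫ x, g x ∂μ| ≤ C₁^2 := abs_int_le hg_meas hg_bdd
    have hsplit : ∀ m : ℕ, ∫ x, G j (T₁^[k] x) * Ψ j (T₃^[k+m] x) ∂μ
        = (∫ x, g x * Ψt j (T₃^[k+m] x) ∂μ) + cΨ j * ∫ x, g x ∂μ := by
      intro m
      have e : (fun x => G j (T₁^[k] x) * Ψ j (T₃^[k+m] x))
          = fun x => g x * Ψt j (T₃^[k+m] x) + cΨ j * g x := by
        funext x
        rw [hg_def]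
        simp only
        rw [hΨt_def]
        simp only
        ring
      rw [e, integral_add, integral_const_mul]
      · exact bdd_integrable (hg_meas.mul ((hΨt_meas j).comp (hT₃m.iterate (k+m))))
          (C := C₁^2 * (2*Cψ^2)) (fun x => by
            rw [abs_mul]
            exact mul_le_mul (hg_bdd x) (hΨt_bdd j _) (abs_nonneg _) (by positivity))
      · exact (bdd_integrable hg_meas hg_bdd).const_mul _
    have hterm : ∀ m : ℕ, |∫ x, G j (T₁^[k] x) * Ψ j (T₃^[k+m] x) ∂μ|
        ≤ |∫ x, g x * Ψt j (T₃^[k+m] x) ∂μ| + C₁^2 * r3 j := by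
      intro m
      rw [hsplit m]
      calc |(∫ x, g x * Ψt j (T₃^[k+m] x) ∂μ) + cΨ j * ∫ x, g x ∂μ|
          ≤ |∫ x, g x * Ψt j (T₃^[k+m] x) ∂μ| + |cΨ j * ∫ x, g x ∂μ| := abs_add_le _ _
        _ ≤ |∫ x, g x * Ψt j (T₃^[k+m] x) ∂μ| + C₁^2 * r3 j := by
            apply add_le_add_right
            rw [abs_mul, hr3c j, mul_comm]
            exact mul_le_mul hgint le_rfl (abs_nonneg _) (by positivity)
    have havg1 : (1/(N:ℝ)) * ∑ m ∈ Icc 1 N, |∫ x, G j (T₁^[k] x) * Ψ j (T₃^[k+m] x) ∂μ|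
        ≤ (1/(N:ℝ)) * ∑ m ∈ Icc 1 N, |∫ x, g x * Ψt j (T₃^[k+m] x) ∂μ| + C₁^2 * r3 j := by
      have h1 : ∑ m ∈ Icc 1 N, |∫ x, G j (T₁^[k] x) * Ψ j (T₃^[k+m] x) ∂μ|
          ≤ ∑ m ∈ Icc 1 N, (|∫ x, g x * Ψt j (T₃^[k+m] x) ∂μ| + C₁^2 * r3 j) :=
        Finset.sum_le_sum fun m _ => hterm m
      have h2 : ∑ m ∈ Icc 1 N, (|∫ x, g x * Ψt j (T₃^[k+m] x) ∂μ| + C₁^2 * r3 j)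
          = (∑ m ∈ Icc 1 N, |∫ x, g x * Ψt j (T₃^[k+m] x) ∂μ|) + (N:ℝ) * (C₁^2 * r3 j) := by
        rw [Finset.sum_add_distrib, Finset.sum_const, nsmul_eq_mul, Nat.card_Icc]
        simp only [Nat.add_sub_cancel]
      calc (1/(N:ℝ)) * ∑ m ∈ Icc 1 N, |∫ x, G j (T₁^[k] x) * Ψ j (T₃^[k+m] x) ∂μ|
          ≤ (1/(N:ℝ)) * ((∑ m ∈ Icc 1 N, |∫ x, g x * Ψt j (T₃^[k+m] x) ∂μ|)
              + (N:ℝ) * (C₁^2 * r3 j)) := by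
            apply mul_le_mul_of_nonneg_left ?_ (by positivity)
            rw [← h2]
            exact h1
        _ = (1/(N:ℝ)) * ∑ m ∈ Icc 1 N, |∫ x, g x * Ψt j (T₃^[k+m] x) ∂μ| + C₁^2 * r3 j := by
            rw [mul_add]
            congr 1
            field_simp
    have havg2 : (1/(N:ℝ)) * ∑ m ∈ Icc 1 N, |∫ x, g x * Ψt j (T₃^[k+m] x) ∂μ|
        ≤ Real.sqrt ((1/(N:ℝ)) * ∑ m ∈ Icc 1 N, (∫ x, g x * Ψt j (T₃^[k+m] x) ∂μ)^2) := by
      have := avg_le_sqrt_avg (q := fun m => (∫ x, g x * Ψt j (T₃^[k+m] x) ∂μ)^2)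
        (fun m => sq_nonneg _) N
      have he : ∀ m ∈ Icc 1 N, Real.sqrt ((∫ x, g x * Ψt j (T₃^[k+m] x) ∂μ)^2)
          = |∫ x, g x * Ψt j (T₃^[k+m] x) ∂μ| := by
        intro m _
        rw [Real.sqrt_sq_eq_abs]
      rw [Finset.sum_congr rfl he] at this
      exact this
    have hsum_sq : ∑ m ∈ Icc 1 N, (∫ x, g x * Ψt j (T₃^[k+m] x) ∂μ)^2
        ≤ (C₁^2)^2 * ((k+N:ℕ):ℝ) * δ j (k+N) := by
      have h1 : ∑ m ∈ Icc 1 N, (∫ x, g x * Ψt j (T₃^[k+m] x) ∂μ)^2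
          = ∑ l ∈ Ioc k (N+k), (∫ x, g x * Ψt j (T₃^[l] x) ∂μ)^2 := by
        have he : ∀ m ∈ Icc 1 N, (∫ x, g x * Ψt j (T₃^[k+m] x) ∂μ)^2
            = (fun l => (∫ x, g x * Ψt j (T₃^[l] x) ∂μ)^2) (m+k) := by
          intro m _
          rw [show k+m = m+k from by omega]
        rw [Finset.sum_congr rfl he]
        exact sum_shift_Icc N k (fun l => (∫ x, g x * Ψt j (T₃^[l] x) ∂μ)^2)
      rw [h1]
      have h2 : ∑ l ∈ Ioc k (N+k), (∫ x, g x * Ψt j (T₃^[l] x) ∂μ)^2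
          ≤ ∑ l ∈ Icc 1 (k+N), (∫ x, g x * Ψt j (T₃^[l] x) ∂μ)^2 := by
        apply Finset.sum_le_sum_of_subset_of_nonneg
        · intro l hl
          rw [mem_Ioc] at hl
          rw [mem_Icc]
          omega
        · intro l _ _
          exact sq_nonneg _
      exact le_trans h2 ((hδ j).2.2 (k+N) g (C₁^2) hg_meas hg_bdd (by positivity))
    have hfinal_sq : (1/(N:ℝ)) * ∑ m ∈ Icc 1 N, (∫ x, g x * Ψt j (T₃^[k+m] x) ∂μ)^2
        ≤ 3 * C₁^4 * δ j (k+N) := by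
      have hδ0 := (hδ j).1 (k+N)
      have hkN : ((k+N:ℕ):ℝ) ≤ 3*(N:ℝ) := by
        push_cast
        have : (k:ℝ) ≤ 2*(N:ℝ) := by exact_mod_cast hk
        linarith
      calc (1/(N:ℝ)) * ∑ m ∈ Icc 1 N, (∫ x, g x * Ψt j (T₃^[k+m] x) ∂μ)^2
          ≤ (1/(N:ℝ)) * ((C₁^2)^2 * ((k+N:ℕ):ℝ) * δ j (k+N)) :=
            mul_le_mul_of_nonneg_left hsum_sq (by positivity)
        _ ≤ (1/(N:ℝ)) * ((C₁^2)^2 * (3*(N:ℝ)) * δ j (k+N)) := by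
            apply mul_le_mul_of_nonneg_left ?_ (by positivity)
            apply mul_le_mul_of_nonneg_right ?_ hδ0
            exact mul_le_mul_of_nonneg_left hkN (by positivity)
        _ = 3 * C₁^4 * δ j (k+N) := by
            field_simp
    calc (1/(N:ℝ)) * ∑ m ∈ Icc 1 N, |∫ x, G j (T₁^[k] x) * Ψ j (T₃^[k+m] x) ∂μ|
        ≤ (1/(N:ℝ)) * ∑ m ∈ Icc 1 N, |∫ x, g x * Ψt j (T₃^[k+m] x) ∂μ| + C₁^2 * r3 j :=
          havg1
      _ ≤ Real.sqrt ((1/(N:ℝ)) * ∑ m ∈ Icc 1 N, (∫ x, g x * Ψt j (T₃^[k+m] x) ∂μ)^2)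
            + C₁^2 * r3 j := by linarith [havg2]
      _ ≤ Real.sqrt (3 * C₁^4 * δ j (k+N)) + C₁^2 * r3 j := by
          have := Real.sqrt_le_sqrt hfinal_sq
          linarith
      _ = C₁^2 * r3 j + Real.sqrt (3 * C₁^4 * δ j (k+N)) := by ring
  -- vdc averaged bound
  have hQQb : ∀ (D N : ℕ), 1 ≤ D → D ≤ N →
      (1/(N:ℝ)) * ∑ m ∈ Icc 1 N,
        ∫ x, ((1/(N:ℝ)) * ∑ n ∈ Icc 1 N, f₁ (T₁^[n] x) * ψ (T₃^[n+m] x))^2 ∂μ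
      ≤ 2*Bu^2/(D:ℝ) + 8*Bu^2*(D:ℝ)^2/(N:ℝ)^2
        + (4/((D:ℝ)*(N:ℝ))) * ∑ j ∈ Icc 1 (D-1), ∑ k ∈ Icc 1 (N+D),
            ((1/(N:ℝ)) * ∑ m ∈ Icc 1 N, |∫ x, G j (T₁^[k] x) * Ψ j (T₃^[k+m] x) ∂μ|) := by
    intro D N hD hDN
    have hN1 : 1 ≤ N := le_trans hD hDN
    have hNpos : (0:ℝ) < N := by exact_mod_cast hN1
    have hvdc : ∀ m : ℕ, ∫ x, ((1/(N:ℝ)) * ∑ n ∈ Icc 1 N, u m n x)^2 ∂μ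
        ≤ 2*Bu^2/(D:ℝ) + 8*Bu^2*(D:ℝ)^2/(N:ℝ)^2
          + (4/((D:ℝ)*(N:ℝ))) * ∑ j ∈ Icc 1 (D-1), ∑ k ∈ Icc 1 (N+D),
              |∫ x, u m k x * u m (k+j) x ∂μ| :=
      fun m => vdc (u m) (hu_meas m) (hu_bdd m) hBu0 hD hDN
    have step : (1/(N:ℝ)) * ∑ m ∈ Icc 1 N,
        ∫ x, ((1/(N:ℝ)) * ∑ n ∈ Icc 1 N, u m n x)^2 ∂μ
        ≤ (1/(N:ℝ)) * ∑ m ∈ Icc 1 N, (2*Bu^2/(D:ℝ) + 8*Bu^2*(D:ℝ)^2/(N:ℝ)^2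
          + (4/((D:ℝ)*(N:ℝ))) * ∑ j ∈ Icc 1 (D-1), ∑ k ∈ Icc 1 (N+D),
              |∫ x, u m k x * u m (k+j) x ∂μ|) := by
      apply mul_le_mul_of_nonneg_left (Finset.sum_le_sum fun m _ => hvdc m) (by positivity)
    have hrearr : (1/(N:ℝ)) * ∑ m ∈ Icc 1 N, (2*Bu^2/(D:ℝ) + 8*Bu^2*(D:ℝ)^2/(N:ℝ)^2
          + (4/((D:ℝ)*(N:ℝ))) * ∑ j ∈ Icc 1 (D-1), ∑ k ∈ Icc 1 (N+D),
              |∫ x, u m k x * u m (k+j) x ∂μ|)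
        = 2*Bu^2/(D:ℝ) + 8*Bu^2*(D:ℝ)^2/(N:ℝ)^2
          + (4/((D:ℝ)*(N:ℝ))) * ∑ j ∈ Icc 1 (D-1), ∑ k ∈ Icc 1 (N+D),
              ((1/(N:ℝ)) * ∑ m ∈ Icc 1 N, |∫ x, u m k x * u m (k+j) x ∂μ|) := by
      rw [Finset.sum_add_distrib, Finset.sum_const, nsmul_eq_mul, Nat.card_Icc]
      simp only [Nat.add_sub_cancel]
      rw [mul_add]
      congr 1
      · rw [show (2*Bu^2/(D:ℝ) + 8*Bu^2*(D:ℝ)^2/(N:ℝ)^2) = (2*Bu^2/(D:ℝ)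
          + 8*Bu^2*(D:ℝ)^2/(N:ℝ)^2) * 1 from (mul_one _).symm]
        rw [show (1/(N:ℝ)) * ((N:ℝ) * ((2*Bu^2/(D:ℝ) + 8*Bu^2*(D:ℝ)^2/(N:ℝ)^2) * 1))
          = ((1/(N:ℝ)) * (N:ℝ)) * ((2*Bu^2/(D:ℝ) + 8*Bu^2*(D:ℝ)^2/(N:ℝ)^2) * 1) from by ring]
        rw [show (1/(N:ℝ)) * (N:ℝ) = 1 from by field_simp]
        ring
      · rw [← Finset.mul_sum]
        rw [show (1/(N:ℝ)) * ((4/((D:ℝ)*(N:ℝ))) * ∑ m ∈ Icc 1 N, ∑ j ∈ Icc 1 (D-1),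
            ∑ k ∈ Icc 1 (N+D), |∫ x, u m k x * u m (k+j) x ∂μ|)
          = (4/((D:ℝ)*(N:ℝ))) * ((1/(N:ℝ)) * ∑ m ∈ Icc 1 N, ∑ j ∈ Icc 1 (D-1),
            ∑ k ∈ Icc 1 (N+D), |∫ x, u m k x * u m (k+j) x ∂μ|) from by ring]
        congr 1
        calc (1/(N:ℝ)) * ∑ m ∈ Icc 1 N, ∑ j ∈ Icc 1 (D-1), ∑ k ∈ Icc 1 (N+D),
              |∫ x, u m k x * u m (k+j) x ∂μ|
            = (1/(N:ℝ)) * ∑ j ∈ Icc 1 (D-1), ∑ k ∈ Icc 1 (N+D), ∑ m ∈ Icc 1 N,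
              |∫ x, u m k x * u m (k+j) x ∂μ| := by
              congr 1
              rw [Finset.sum_comm]
              exact Finset.sum_congr rfl fun j _ => Finset.sum_comm
          _ = ∑ j ∈ Icc 1 (D-1), ∑ k ∈ Icc 1 (N+D), ((1/(N:ℝ)) * ∑ m ∈ Icc 1 N,
              |∫ x, u m k x * u m (k+j) x ∂μ|) := by
              rw [Finset.mul_sum]
              exact Finset.sum_congr rfl fun j _ => by rw [Finset.mul_sum]
    have hcongr : ∀ j k : ℕ, (1/(N:ℝ)) * ∑ m ∈ Icc 1 N, |∫ x, u m k x * u m (k+j) x ∂μ|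
        = (1/(N:ℝ)) * ∑ m ∈ Icc 1 N, |∫ x, G j (T₁^[k] x) * Ψ j (T₃^[k+m] x) ∂μ| := by
      intro j k
      congr 1
      apply Finset.sum_congr rfl
      intro m _
      rw [hcorr m k j]
    calc (1/(N:ℝ)) * ∑ m ∈ Icc 1 N,
          ∫ x, ((1/(N:ℝ)) * ∑ n ∈ Icc 1 N, f₁ (T₁^[n] x) * ψ (T₃^[n+m] x))^2 ∂μ
        ≤ 2*Bu^2/(D:ℝ) + 8*Bu^2*(D:ℝ)^2/(N:ℝ)^2
          + (4/((D:ℝ)*(N:ℝ))) * ∑ j ∈ Icc 1 (D-1), ∑ k ∈ Icc 1 (N+D),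
              ((1/(N:ℝ)) * ∑ m ∈ Icc 1 N, |∫ x, u m k x * u m (k+j) x ∂μ|) := by
          rw [← hrearr]
          exact step
      _ = _ := by
          congr 1
          congr 1
          apply Finset.sum_congr rfl
          intro j _
          apply Finset.sum_congr rfl
          intro k _
          exact hcongr j k
  -- final epsilon argument
  rw [Metric.tendsto_atTop]
  intro ε hε
  -- choose D
  have hDterm : Tendsto (fun D : ℕ => 2*Bu^2/(D:ℝ)
      + 8*C₁^2*((1/(D:ℝ)) * ∑ j ∈ Icc 1 (D-1), r3 j)) atTop (nhds 0) := by
    have h1 := const_div_tendsto (2*Bu^2)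
    have h2 : Tendsto (fun D : ℕ => (1/(D:ℝ)) * ∑ j ∈ Icc 1 (D-1), r3 j) atTop (nhds 0) := by
      apply squeeze_zero (fun D => mul_nonneg (by positivity)
        (Finset.sum_nonneg fun j _ => hr30 j)) (fun D => ?_) hr3
      apply mul_le_mul_of_nonneg_left ?_ (by positivity)
      apply Finset.sum_le_sum_of_subset_of_nonneg
      · apply Finset.Icc_subset_Icc_right; omega
      · intro j _ _; exact hr30 j
    have h3 := h2.const_mul (8*C₁^2)
    rw [mul_zero] at h3
    have := h1.add h3
    rw [add_zero] at this
    exact this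
  obtain ⟨D₀, hD₀⟩ := Filter.eventually_atTop.mp
    ((hDterm.eventually_lt_const (by linarith : (0:ℝ) < ε/2)).and
      (Filter.eventually_ge_atTop 1))
  have hD₀1 : 1 ≤ D₀ := (hD₀ D₀ le_rfl).2
  have hD₀small := (hD₀ D₀ le_rfl).1
  have hD₀pos : (0:ℝ) < D₀ := by exact_mod_cast hD₀1
  -- choose sigma
  set σ : ℝ := (ε/32)^2/(3*C₁^4+1) with hσ_def
  have hσpos : 0 < σ := by positivity
  have hsqrtσ : Real.sqrt (3*C₁^4*σ) ≤ ε/32 := by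
    have h1 : 3*C₁^4*σ ≤ (ε/32)^2 := by
      rw [hσ_def]
      rw [div_eq_mul_inv, ← mul_assoc]
      have h2 : 3*C₁^4 ≤ 3*C₁^4+1 := by linarith
      have h3 : (0:ℝ) < 3*C₁^4+1 := by positivity
      calc 3*C₁^4 * (ε/32)^2 * (3*C₁^4+1)⁻¹
          ≤ (3*C₁^4+1) * (ε/32)^2 * (3*C₁^4+1)⁻¹ := by
            apply mul_le_mul_of_nonneg_right ?_ (by positivity)
            exact mul_le_mul_of_nonneg_right h2 (by positivity)
        _ = (ε/32)^2 := by field_simp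
    calc Real.sqrt (3*C₁^4*σ) ≤ Real.sqrt ((ε/32)^2) := Real.sqrt_le_sqrt h1
      _ = |ε/32| := Real.sqrt_sq_eq_abs _
      _ = ε/32 := abs_of_pos (by linarith)
  -- choose N threshold for the deltas
  have hMj : ∀ j : ℕ, ∃ Mj : ℕ, ∀ M ≥ Mj, δ j M < σ := by
    intro j
    exact Filter.eventually_atTop.mp (((hδ j).2.1).eventually_lt_const hσpos)
  choose Mf hMf using hMj
  set N₁ : ℕ := Finset.sup (Icc 1 (D₀-1)) Mf with hN₁_def
  -- choose N threshold for the D²/N² term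
  have hNterm : Tendsto (fun N : ℕ => 8*Bu^2*(D₀:ℝ)^2/(N:ℝ)^2) atTop (nhds 0) := by
    have h1 : Tendsto (fun N : ℕ => ((N:ℝ)^2)) atTop atTop := by
      apply Tendsto.comp (tendsto_pow_atTop (by norm_num : 2 ≠ 0)) tendsto_natCast_atTop_atTop
    exact Tendsto.div_atTop tendsto_const_nhds h1
  obtain ⟨N₂, hN₂⟩ := Filter.eventually_atTop.mp
    (hNterm.eventually_lt_const (by linarith : (0:ℝ) < ε/8))
  refine ⟨max (max D₀ N₁) N₂, fun N hN => ?_⟩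
  have hND₀ : D₀ ≤ N := le_trans (le_trans (le_max_left _ _) (le_max_left _ _)) hN
  have hNN₁ : N₁ ≤ N := le_trans (le_trans (le_max_right _ _) (le_max_left _ _)) hN
  have hNN₂ : N₂ ≤ N := le_trans (le_max_right _ _) hN
  have hN1 : 1 ≤ N := le_trans hD₀1 hND₀
  have hNpos : (0:ℝ) < N := by exact_mod_cast hN1
  have hQQ0 : 0 ≤ (1/(N:ℝ)) * ∑ m ∈ Icc 1 N,
      ∫ x, ((1/(N:ℝ)) * ∑ n ∈ Icc 1 N, f₁ (T₁^[n] x) * ψ (T₃^[n+m] x))^2 ∂μ := by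
    apply mul_nonneg (by positivity)
    apply Finset.sum_nonneg
    intro m _
    exact integral_nonneg fun x => sq_nonneg _
  rw [Real.dist_eq, sub_zero, abs_of_nonneg hQQ0]
  -- apply the bound
  have hbound := hQQb D₀ N hD₀1 hND₀
  -- bound the correlation double sum
  have hRb : ∀ j ∈ Icc 1 (D₀-1), ∀ k ∈ Icc 1 (N+D₀),
      (1/(N:ℝ)) * ∑ m ∈ Icc 1 N, |∫ x, G j (T₁^[k] x) * Ψ j (T₃^[k+m] x) ∂μ|
        ≤ C₁^2 * r3 j + ε/32 := by
    intro j hj k hk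
    rw [mem_Icc] at hk
    have hk2N : k ≤ 2*N := by omega
    have hδsmall : δ j (k+N) < σ := by
      apply hMf j
      have : Mf j ≤ N₁ := Finset.le_sup hj
      omega
    calc (1/(N:ℝ)) * ∑ m ∈ Icc 1 N, |∫ x, G j (T₁^[k] x) * Ψ j (T₃^[k+m] x) ∂μ|
        ≤ C₁^2 * r3 j + Real.sqrt (3 * C₁^4 * δ j (k+N)) := Rb j k N hN1 hk2N
      _ ≤ C₁^2 * r3 j + ε/32 := by
          apply add_le_add_right
          apply le_trans ?_ hsqrtσ
          apply Real.sqrt_le_sqrt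
          apply mul_le_mul_of_nonneg_left (le_of_lt hδsmall) (by positivity)
  have hcard_k : (((Icc 1 (N+D₀)).card : ℕ) : ℝ) = ((N+D₀:ℕ):ℝ) := by
    rw [Nat.card_Icc]; simp
  have hcard_j : (((Icc 1 (D₀-1)).card : ℕ) : ℝ) = ((D₀-1:ℕ):ℝ) := by
    rw [Nat.card_Icc]; simp
  have hsumr3_0 : 0 ≤ ∑ j ∈ Icc 1 (D₀-1), r3 j := Finset.sum_nonneg fun j _ => hr30 j
  have hsum_bound : (4/((D₀:ℝ)*(N:ℝ))) * ∑ j ∈ Icc 1 (D₀-1), ∑ k ∈ Icc 1 (N+D₀),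
        ((1/(N:ℝ)) * ∑ m ∈ Icc 1 N, |∫ x, G j (T₁^[k] x) * Ψ j (T₃^[k+m] x) ∂μ|)
      ≤ 8*C₁^2*((1/(D₀:ℝ)) * ∑ j ∈ Icc 1 (D₀-1), r3 j) + ε/4 := by
    have h1 : ∑ j ∈ Icc 1 (D₀-1), ∑ k ∈ Icc 1 (N+D₀),
          ((1/(N:ℝ)) * ∑ m ∈ Icc 1 N, |∫ x, G j (T₁^[k] x) * Ψ j (T₃^[k+m] x) ∂μ|)
        ≤ ∑ j ∈ Icc 1 (D₀-1), ∑ k ∈ Icc 1 (N+D₀), (C₁^2 * r3 j + ε/32) :=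
      Finset.sum_le_sum fun j hj => Finset.sum_le_sum fun k hk => hRb j hj k hk
    have h2 : ∑ j ∈ Icc 1 (D₀-1), ∑ k ∈ Icc 1 (N+D₀), (C₁^2 * r3 j + ε/32)
        = ((N+D₀:ℕ):ℝ) * (C₁^2 * ∑ j ∈ Icc 1 (D₀-1), r3 j + ((D₀-1:ℕ):ℝ)*(ε/32)) := by
      have hin : ∀ j ∈ Icc 1 (D₀-1), ∑ k ∈ Icc 1 (N+D₀), (C₁^2 * r3 j + ε/32)
          = ((N+D₀:ℕ):ℝ) * (C₁^2 * r3 j + ε/32) := by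
        intro j _
        rw [Finset.sum_const, nsmul_eq_mul, hcard_k]
      rw [Finset.sum_congr rfl hin, ← Finset.mul_sum, Finset.sum_add_distrib,
        Finset.sum_const, nsmul_eq_mul, hcard_j, ← Finset.mul_sum]
    have hND2N : ((N+D₀:ℕ):ℝ) ≤ 2*(N:ℝ) := by
      push_cast
      have : (D₀:ℝ) ≤ (N:ℝ) := by exact_mod_cast hND₀
      linarith
    have hBr0 : (0:ℝ) ≤ C₁^2 * ∑ j ∈ Icc 1 (D₀-1), r3 j + ((D₀-1:ℕ):ℝ)*(ε/32) := by
      apply add_nonneg (mul_nonneg (by positivity) hsumr3_0) (by positivity)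
    have hD₀1' : ((D₀-1:ℕ):ℝ) ≤ (D₀:ℝ) := by exact_mod_cast Nat.sub_le D₀ 1
    calc (4/((D₀:ℝ)*(N:ℝ))) * ∑ j ∈ Icc 1 (D₀-1), ∑ k ∈ Icc 1 (N+D₀),
          ((1/(N:ℝ)) * ∑ m ∈ Icc 1 N, |∫ x, G j (T₁^[k] x) * Ψ j (T₃^[k+m] x) ∂μ|)
        ≤ (4/((D₀:ℝ)*(N:ℝ))) * (((N+D₀:ℕ):ℝ) * (C₁^2 * ∑ j ∈ Icc 1 (D₀-1), r3 j
            + ((D₀-1:ℕ):ℝ)*(ε/32))) := by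
          apply mul_le_mul_of_nonneg_left ?_ (by positivity)
          rw [← h2]
          exact h1
      _ ≤ (4/((D₀:ℝ)*(N:ℝ))) * ((2*(N:ℝ)) * (C₁^2 * ∑ j ∈ Icc 1 (D₀-1), r3 j
            + ((D₀-1:ℕ):ℝ)*(ε/32))) := by
          apply mul_le_mul_of_nonneg_left ?_ (by positivity)
          exact mul_le_mul_of_nonneg_right hND2N hBr0
      _ = (8/(D₀:ℝ)) * (C₁^2 * ∑ j ∈ Icc 1 (D₀-1), r3 j)
          + (8/(D₀:ℝ)) * (((D₀-1:ℕ):ℝ)*(ε/32)) := by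
          field_simp
          ring
      _ ≤ 8*C₁^2*((1/(D₀:ℝ)) * ∑ j ∈ Icc 1 (D₀-1), r3 j) + ε/4 := by
          apply add_le_add
          · apply le_of_eq
            field_simp
          · calc (8/(D₀:ℝ)) * (((D₀-1:ℕ):ℝ)*(ε/32))
                ≤ (8/(D₀:ℝ)) * ((D₀:ℝ)*(ε/32)) := by
                  apply mul_le_mul_of_nonneg_left ?_ (by positivity)
                  exact mul_le_mul_of_nonneg_right hD₀1' (by positivity)
              _ = ε/4 := by field_simp; ring
  calc (1/(N:ℝ)) * ∑ m ∈ Icc 1 N,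
        ∫ x, ((1/(N:ℝ)) * ∑ n ∈ Icc 1 N, f₁ (T₁^[n] x) * ψ (T₃^[n+m] x))^2 ∂μ
      ≤ 2*Bu^2/(D₀:ℝ) + 8*Bu^2*(D₀:ℝ)^2/(N:ℝ)^2
        + (4/((D₀:ℝ)*(N:ℝ))) * ∑ j ∈ Icc 1 (D₀-1), ∑ k ∈ Icc 1 (N+D₀),
            ((1/(N:ℝ)) * ∑ m ∈ Icc 1 N, |∫ x, G j (T₁^[k] x) * Ψ j (T₃^[k+m] x) ∂μ|) :=
        hbound
    _ ≤ 2*Bu^2/(D₀:ℝ) + 8*Bu^2*(D₀:ℝ)^2/(N:ℝ)^2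
        + (8*C₁^2*((1/(D₀:ℝ)) * ∑ j ∈ Icc 1 (D₀-1), r3 j) + ε/4) := by
        linarith [hsum_bound]
    _ < ε := by
        have hh1 := hD₀small
        have hh2 := hN₂ N hNN₂
        linarith

end MAINEST


set_option maxHeartbeats 1600000 in
/-- **L¹-norm convergence of cube averages of three functions for three (not
necessarily commuting) weakly mixing transformations to the product of the
integrals.** -/
theorem tendsto_L1_cube_averages_three_weaklyMixing
    {X : Type*} [MeasurableSpace X] (μ : Measure X) [IsProbabilityMeasure μ]
    (T₁ T₂ T₃ : X → X)
    (hT₁ : WeaklyMixing μ T₁) (hT₂ : WeaklyMixing μ T₂) (hT₃ : WeaklyMixing μ T₃)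
    (f₁ f₂ f₃ : X → ℝ)
    (hf₁ : Measurable f₁) (hf₂ : Measurable f₂) (hf₃ : Measurable f₃)
    (hb₁ : ∃ C, ∀ x, |f₁ x| ≤ C) (hb₂ : ∃ C, ∀ x, |f₂ x| ≤ C)
    (hb₃ : ∃ C, ∀ x, |f₃ x| ≤ C) :
    Tendsto (fun N : ℕ =>
        eLpNorm (fun x =>
          (1 / (N : ℝ) ^ 2) * ∑ m ∈ Finset.Icc 1 N, ∑ n ∈ Finset.Icc 1 N,
            f₁ (T₁^[n] x) * f₂ (T₂^[m] x) * f₃ (T₃^[n + m] x) -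
          (∫ y, f₁ y ∂μ) * (∫ y, f₂ y ∂μ) * (∫ y, f₃ y ∂μ)) 1 μ)
      atTop (nhds 0) := by
  classical
  obtain ⟨C₁', hb₁'⟩ := hb₁
  obtain ⟨C₂', hb₂'⟩ := hb₂
  obtain ⟨C₃', hb₃'⟩ := hb₃
  set C₁ : ℝ := max C₁' 0 with hC₁_def
  set C₂ : ℝ := max C₂' 0 with hC₂_def
  set C₃ : ℝ := max C₃' 0 with hC₃_def
  have hB₁ : ∀ x, |f₁ x| ≤ C₁ := fun x => le_trans (hb₁' x) (le_max_left _ _)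
  have hB₂ : ∀ x, |f₂ x| ≤ C₂ := fun x => le_trans (hb₂' x) (le_max_left _ _)
  have hB₃ : ∀ x, |f₃ x| ≤ C₃ := fun x => le_trans (hb₃' x) (le_max_left _ _)
  have hC₁0 : 0 ≤ C₁ := le_max_right _ _
  have hC₂0 : 0 ≤ C₂ := le_max_right _ _
  have hC₃0 : 0 ≤ C₃ := le_max_right _ _
  set c₁ : ℝ := ∫ y, f₁ y ∂μ with hc₁_def
  set c₂ : ℝ := ∫ y, f₂ y ∂μ with hc₂_def
  set c₃ : ℝ := ∫ y, f₃ y ∂μ with hc₃_def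
  have hc₁b : |c₁| ≤ C₁ := abs_int_le hf₁ hB₁
  have hc₂b : |c₂| ≤ C₂ := abs_int_le hf₂ hB₂
  have hc₃b : |c₃| ≤ C₃ := abs_int_le hf₃ hB₃
  set ψ : X → ℝ := fun x => f₃ x - c₃ with hψ_def
  have hψm : Measurable ψ := hf₃.sub measurable_const
  have hbψ : ∀ x, |ψ x| ≤ 2*C₃ := by
    intro x
    calc |ψ x| ≤ |f₃ x| + |c₃| := abs_sub _ _
      _ ≤ 2*C₃ := by have := hB₃ x; linarith
  have hψ0 : ∫ x, ψ x ∂μ = 0 := by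
    rw [hψ_def]
    simp only
    rw [integral_sub (bdd_integrable hf₃ hB₃) (integrable_const _), integral_const]
    simp [hc₃_def]
  -- local abbreviations
  set y : ℕ → ℕ → X → ℝ := fun N m x => (1/(N:ℝ)) * ∑ n ∈ Icc 1 N,
    f₁ (T₁^[n] x) * ψ (T₃^[n+m] x) with hy_def
  set W : ℕ → X → ℝ := fun N x => (1/(N:ℝ)) * ∑ m ∈ Icc 1 N, f₂ (T₂^[m] x) * y N m x
    with hW_def
  set P : ℕ → X → ℝ := fun N x => (1/(N:ℝ)) * ∑ n ∈ Icc 1 N, f₁ (T₁^[n] x) with hP_def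
  set Q : ℕ → X → ℝ := fun N x => (1/(N:ℝ)) * ∑ m ∈ Icc 1 N, f₂ (T₂^[m] x) with hQ_def
  have hy_meas : ∀ N m, Measurable (y N m) := fun N m =>
    (Finset.measurable_sum _ fun n _ => (hf₁.comp (hT₁.1.measurable.iterate n)).mul
      (hψm.comp (hT₃.1.measurable.iterate (n+m)))).const_mul _
  have hy_bdd : ∀ N m x, |y N m x| ≤ C₁ * (2*C₃) := by
    intro N m x
    simp only [hy_def]
    exact avg_bdd_gen (g := fun n x => f₁ (T₁^[n] x) * ψ (T₃^[n+m] x)) (by positivity)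
      (fun n x' => by
        rw [abs_mul]
        exact mul_le_mul (hB₁ _) (hbψ _) (abs_nonneg _) hC₁0) N x
  have hW_meas : ∀ N, Measurable (W N) := fun N =>
    (Finset.measurable_sum _ fun m _ => (hf₂.comp (hT₂.1.measurable.iterate m)).mul
      (hy_meas N m)).const_mul _
  have hW_bdd : ∀ N x, |W N x| ≤ C₂ * (C₁ * (2*C₃)) := by
    intro N x
    simp only [hW_def]
    exact avg_bdd_gen (g := fun m x => f₂ (T₂^[m] x) * y N m x) (by positivity)
      (fun m x' => by
        rw [abs_mul]
        exact mul_le_mul (hB₂ _) (hy_bdd N m x') (abs_nonneg _) hC₂0) N x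
  have hP_meas : ∀ N, Measurable (P N) := fun N =>
    (Finset.measurable_sum _ fun n _ => hf₁.comp (hT₁.1.measurable.iterate n)).const_mul _
  have hQ_meas : ∀ N, Measurable (Q N) := fun N =>
    (Finset.measurable_sum _ fun m _ => hf₂.comp (hT₂.1.measurable.iterate m)).const_mul _
  have hP_bdd : ∀ N x, |P N x| ≤ C₁ := by
    intro N x
    simp only [hP_def]
    exact avg_bdd_gen (g := fun n x => f₁ (T₁^[n] x)) hC₁0 (fun n x' => hB₁ _) N x
  have hQ_bdd : ∀ N x, |Q N x| ≤ C₂ := by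
    intro N x
    simp only [hQ_def]
    exact avg_bdd_gen (g := fun m x => f₂ (T₂^[m] x)) hC₂0 (fun m x' => hB₂ _) N x
  -- pointwise identity
  have hident : ∀ (N : ℕ) (x : X),
      (1 / (N : ℝ) ^ 2) * ∑ m ∈ Icc 1 N, ∑ n ∈ Icc 1 N,
        f₁ (T₁^[n] x) * f₂ (T₂^[m] x) * f₃ (T₃^[n + m] x)
      = W N x + c₃ * (Q N x * P N x) := by
    intro N x
    have h2N : (1/(N:ℝ)^2) = (1/(N:ℝ))*(1/(N:ℝ)) := by
      rw [pow_two, ← one_div_mul_one_div]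
    simp only [hW_def, hQ_def, hP_def, hy_def]
    rw [h2N]
    rw [show c₃ * ((1/(N:ℝ) * ∑ m ∈ Icc 1 N, f₂ (T₂^[m] x))
        * (1/(N:ℝ) * ∑ n ∈ Icc 1 N, f₁ (T₁^[n] x)))
      = (c₃ * (1/(N:ℝ)) * (1/(N:ℝ)))
        * ((∑ m ∈ Icc 1 N, f₂ (T₂^[m] x)) * (∑ n ∈ Icc 1 N, f₁ (T₁^[n] x))) from by ring]
    rw [Finset.sum_mul_sum]
    simp only [Finset.mul_sum]
    rw [← Finset.sum_add_distrib]
    refine Finset.sum_congr rfl fun m _ => ?_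
    rw [← Finset.sum_add_distrib]
    refine Finset.sum_congr rfl fun n _ => ?_
    have hψe : ψ (T₃^[n+m] x) = f₃ (T₃^[n+m] x) - c₃ := by simp only [hψ_def]
    rw [hψe]
    ring
  -- pointwise bound
  have hptb : ∀ (N : ℕ) (x : X),
      |(1 / (N : ℝ) ^ 2) * ∑ m ∈ Icc 1 N, ∑ n ∈ Icc 1 N,
        f₁ (T₁^[n] x) * f₂ (T₂^[m] x) * f₃ (T₃^[n + m] x) - c₁ * c₂ * c₃|
      ≤ |W N x| + |c₃| * (C₁ * |Q N x - c₂| + |c₂| * |P N x - c₁|) := by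
    intro N x
    have h1 : (1 / (N : ℝ) ^ 2) * ∑ m ∈ Icc 1 N, ∑ n ∈ Icc 1 N,
        f₁ (T₁^[n] x) * f₂ (T₂^[m] x) * f₃ (T₃^[n + m] x) - c₁ * c₂ * c₃
        = W N x + c₃ * ((Q N x - c₂) * P N x + c₂ * (P N x - c₁)) := by
      rw [hident N x]
      ring
    rw [h1]
    calc |W N x + c₃ * ((Q N x - c₂) * P N x + c₂ * (P N x - c₁))|
        ≤ |W N x| + |c₃| * |(Q N x - c₂) * P N x + c₂ * (P N x - c₁)| := by
          have h0 := abs_add_le (W N x) (c₃ * ((Q N x - c₂) * P N x + c₂ * (P N x - c₁)))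
          rw [abs_mul c₃] at h0
          exact h0
      _ ≤ |W N x| + |c₃| * (C₁ * |Q N x - c₂| + |c₂| * |P N x - c₁|) := by
          apply add_le_add_right
          apply mul_le_mul_of_nonneg_left ?_ (abs_nonneg _)
          calc |(Q N x - c₂) * P N x + c₂ * (P N x - c₁)|
              ≤ |(Q N x - c₂) * P N x| + |c₂ * (P N x - c₁)| := abs_add_le _ _
            _ = |Q N x - c₂| * |P N x| + |c₂| * |P N x - c₁| := by
                rw [abs_mul (Q N x - c₂), abs_mul c₂]
            _ ≤ C₁ * |Q N x - c₂| + |c₂| * |P N x - c₁| := by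
                have h2 : |Q N x - c₂| * |P N x| ≤ |Q N x - c₂| * C₁ :=
                  mul_le_mul_of_nonneg_left (hP_bdd N x) (abs_nonneg _)
                nlinarith [h2]
  -- integrabilities
  have hiW : ∀ N, Integrable (fun x => |W N x|) μ := fun N =>
    (bdd_integrable (hW_meas N) (hW_bdd N)).abs
  have hiQ : ∀ N, Integrable (fun x => |Q N x - c₂|) μ := fun N =>
    (bdd_integrable ((hQ_meas N).sub measurable_const) (C := C₂ + |c₂|) (fun x => by
      calc |Q N x - c₂| ≤ |Q N x| + |c₂| := abs_sub _ _
        _ ≤ C₂ + |c₂| := by have := hQ_bdd N x; linarith)).abs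
  have hiP : ∀ N, Integrable (fun x => |P N x - c₁|) μ := fun N =>
    (bdd_integrable ((hP_meas N).sub measurable_const) (C := C₁ + |c₁|) (fun x => by
      calc |P N x - c₁| ≤ |P N x| + |c₁| := abs_sub _ _
        _ ≤ C₁ + |c₁| := by have := hP_bdd N x; linarith)).abs
  -- integral bound
  have hintb : ∀ N : ℕ,
      ∫ x, |(1 / (N : ℝ) ^ 2) * ∑ m ∈ Icc 1 N, ∑ n ∈ Icc 1 N,
        f₁ (T₁^[n] x) * f₂ (T₂^[m] x) * f₃ (T₃^[n + m] x) - c₁ * c₂ * c₃| ∂μ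
      ≤ (∫ x, |W N x| ∂μ) + |c₃| * (C₁ * ∫ x, |Q N x - c₂| ∂μ)
        + |c₃| * (|c₂| * ∫ x, |P N x - c₁| ∂μ) := by
    intro N
    have hAmeas : Measurable (fun x => (1 / (N : ℝ) ^ 2) * ∑ m ∈ Icc 1 N, ∑ n ∈ Icc 1 N,
        f₁ (T₁^[n] x) * f₂ (T₂^[m] x) * f₃ (T₃^[n + m] x) - c₁ * c₂ * c₃) := by
      apply Measurable.sub ?_ measurable_const
      apply Measurable.const_mul
      apply Finset.measurable_sum
      intro m _
      apply Finset.measurable_sum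
      intro n _
      exact ((hf₁.comp (hT₁.1.measurable.iterate n)).mul
        (hf₂.comp (hT₂.1.measurable.iterate m))).mul
        (hf₃.comp (hT₃.1.measurable.iterate (n+m)))
    have hAbdd : ∀ x, |(1 / (N : ℝ) ^ 2) * ∑ m ∈ Icc 1 N, ∑ n ∈ Icc 1 N,
        f₁ (T₁^[n] x) * f₂ (T₂^[m] x) * f₃ (T₃^[n + m] x) - c₁ * c₂ * c₃|
        ≤ C₂ * (C₁ * (2*C₃)) + |c₃| * (C₁ * (C₂ + |c₂|) + |c₂| * (C₁ + |c₁|)) := by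
      intro x
      calc |(1 / (N : ℝ) ^ 2) * ∑ m ∈ Icc 1 N, ∑ n ∈ Icc 1 N,
            f₁ (T₁^[n] x) * f₂ (T₂^[m] x) * f₃ (T₃^[n + m] x) - c₁ * c₂ * c₃|
          ≤ |W N x| + |c₃| * (C₁ * |Q N x - c₂| + |c₂| * |P N x - c₁|) := hptb N x
        _ ≤ C₂ * (C₁ * (2*C₃)) + |c₃| * (C₁ * (C₂ + |c₂|) + |c₂| * (C₁ + |c₁|)) := by
            have h1 := hW_bdd N x
            have h2 : |Q N x - c₂| ≤ C₂ + |c₂| := by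
              calc |Q N x - c₂| ≤ |Q N x| + |c₂| := abs_sub _ _
                _ ≤ C₂ + |c₂| := by have := hQ_bdd N x; linarith
            have h3 : |P N x - c₁| ≤ C₁ + |c₁| := by
              calc |P N x - c₁| ≤ |P N x| + |c₁| := abs_sub _ _
                _ ≤ C₁ + |c₁| := by have := hP_bdd N x; linarith
            have h4 : C₁ * |Q N x - c₂| + |c₂| * |P N x - c₁|
                ≤ C₁ * (C₂ + |c₂|) + |c₂| * (C₁ + |c₁|) := by
              apply add_le_add
              · exact mul_le_mul_of_nonneg_left h2 hC₁0
              · exact mul_le_mul_of_nonneg_left h3 (abs_nonneg _)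
            have h5 : |c₃| * (C₁ * |Q N x - c₂| + |c₂| * |P N x - c₁|)
                ≤ |c₃| * (C₁ * (C₂ + |c₂|) + |c₂| * (C₁ + |c₁|)) :=
              mul_le_mul_of_nonneg_left h4 (abs_nonneg _)
            linarith
    calc ∫ x, |(1 / (N : ℝ) ^ 2) * ∑ m ∈ Icc 1 N, ∑ n ∈ Icc 1 N,
          f₁ (T₁^[n] x) * f₂ (T₂^[m] x) * f₃ (T₃^[n + m] x) - c₁ * c₂ * c₃| ∂μ
        ≤ ∫ x, (|W N x| + |c₃| * (C₁ * |Q N x - c₂| + |c₂| * |P N x - c₁|)) ∂μ := by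
          have hiQ' : Integrable (fun x => C₁ * |Q N x - c₂|) μ := (hiQ N).const_mul _
          have hiP' : Integrable (fun x => |c₂| * |P N x - c₁|) μ := (hiP N).const_mul _
          have hi2 : Integrable (fun x => C₁ * |Q N x - c₂| + |c₂| * |P N x - c₁|) μ :=
            hiQ'.add hiP'
          have hi3 : Integrable (fun x => |c₃| * (C₁ * |Q N x - c₂| + |c₂| * |P N x - c₁|)) μ :=
            hi2.const_mul _
          apply integral_mono ((bdd_integrable hAmeas hAbdd).abs) ((hiW N).add hi3)
          intro x
          exact hptb N x
      _ = (∫ x, |W N x| ∂μ) + |c₃| * (C₁ * ∫ x, |Q N x - c₂| ∂μ)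
          + |c₃| * (|c₂| * ∫ x, |P N x - c₁| ∂μ) := by
          have hiQ' : Integrable (fun x => C₁ * |Q N x - c₂|) μ := (hiQ N).const_mul _
          have hiP' : Integrable (fun x => |c₂| * |P N x - c₁|) μ := (hiP N).const_mul _
          have hi2 : Integrable (fun x => C₁ * |Q N x - c₂| + |c₂| * |P N x - c₁|) μ :=
            hiQ'.add hiP'
          have hi3 : Integrable (fun x => |c₃| * (C₁ * |Q N x - c₂| + |c₂| * |P N x - c₁|)) μ :=
            hi2.const_mul _
          rw [integral_add (hiW N) hi3, integral_const_mul, integral_add hiQ' hiP',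
            integral_const_mul, integral_const_mul]
          ring
  -- control of ∫ |W|
  have hWQQ : ∀ N : ℕ, ∫ x, |W N x| ∂μ
      ≤ C₂ * Real.sqrt ((1/(N:ℝ)) * ∑ m ∈ Icc 1 N, ∫ x, (y N m x)^2 ∂μ) := by
    intro N
    have hiy : ∀ m, Integrable (fun x => |y N m x|) μ := fun m =>
      (bdd_integrable (hy_meas N m) (hy_bdd N m)).abs
    have h1 : ∫ x, |W N x| ∂μ ≤ ∫ x, ((1/(N:ℝ)) * ∑ m ∈ Icc 1 N, C₂ * |y N m x|) ∂μ := by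
      apply integral_mono (hiW N)
      · exact (integrable_finset_sum _ (fun m _ => (hiy m).const_mul _)).const_mul _
      intro x
      calc |W N x| ≤ (1/(N:ℝ)) * ∑ m ∈ Icc 1 N, |f₂ (T₂^[m] x) * y N m x| := by
            rcases Nat.eq_zero_or_pos N with h | h
            · subst h; simp [hW_def]
            rw [hW_def]
            simp only
            rw [abs_mul, abs_of_pos (by positivity : (0:ℝ) < 1/(N:ℝ))]
            exact mul_le_mul_of_nonneg_left (Finset.abs_sum_le_sum_abs _ _) (by positivity)
        _ ≤ (1/(N:ℝ)) * ∑ m ∈ Icc 1 N, C₂ * |y N m x| := by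
            apply mul_le_mul_of_nonneg_left ?_ (by positivity)
            apply Finset.sum_le_sum
            intro m _
            rw [abs_mul]
            exact mul_le_mul_of_nonneg_right (hB₂ _) (abs_nonneg _)
    have h2 : ∫ x, ((1/(N:ℝ)) * ∑ m ∈ Icc 1 N, C₂ * |y N m x|) ∂μ
        = C₂ * ((1/(N:ℝ)) * ∑ m ∈ Icc 1 N, ∫ x, |y N m x| ∂μ) := by
      rw [integral_const_mul, integral_finset_sum _ (fun m _ => (hiy m).const_mul _)]
      rw [show ∑ m ∈ Icc 1 N, ∫ x, C₂ * |y N m x| ∂μ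
        = ∑ m ∈ Icc 1 N, C₂ * ∫ x, |y N m x| ∂μ from
        Finset.sum_congr rfl (fun m _ => integral_const_mul _ _), ← Finset.mul_sum]
      ring
    have h3 : (1/(N:ℝ)) * ∑ m ∈ Icc 1 N, ∫ x, |y N m x| ∂μ
        ≤ Real.sqrt ((1/(N:ℝ)) * ∑ m ∈ Icc 1 N, ∫ x, (y N m x)^2 ∂μ) := by
      have h4 : ∀ m ∈ Icc 1 N, ∫ x, |y N m x| ∂μ
          ≤ Real.sqrt (∫ x, (y N m x)^2 ∂μ) := fun m _ =>
        int_abs_le_sqrt (hy_meas N m) (hy_bdd N m)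
      calc (1/(N:ℝ)) * ∑ m ∈ Icc 1 N, ∫ x, |y N m x| ∂μ
          ≤ (1/(N:ℝ)) * ∑ m ∈ Icc 1 N, Real.sqrt (∫ x, (y N m x)^2 ∂μ) := by
            apply mul_le_mul_of_nonneg_left (Finset.sum_le_sum h4) (by positivity)
        _ ≤ Real.sqrt ((1/(N:ℝ)) * ∑ m ∈ Icc 1 N, ∫ x, (y N m x)^2 ∂μ) :=
            avg_le_sqrt_avg (fun m => integral_nonneg fun x => sq_nonneg _) N
    calc ∫ x, |W N x| ∂μ ≤ ∫ x, ((1/(N:ℝ)) * ∑ m ∈ Icc 1 N, C₂ * |y N m x|) ∂μ := h1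
      _ = C₂ * ((1/(N:ℝ)) * ∑ m ∈ Icc 1 N, ∫ x, |y N m x| ∂μ) := h2
      _ ≤ C₂ * Real.sqrt ((1/(N:ℝ)) * ∑ m ∈ Icc 1 N, ∫ x, (y N m x)^2 ∂μ) :=
          mul_le_mul_of_nonneg_left h3 hC₂0
  -- tendsto of the three components
  have hQQt := QQ_tendsto (μ := μ) hT₁.1.measurable hT₃ hf₁ hB₁ hC₁0 hψm hbψ
    (by positivity) hψ0
  have hWt : Tendsto (fun N : ℕ => ∫ x, |W N x| ∂μ) atTop (nhds 0) := by
    have h := (hQQt.sqrt).const_mul C₂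
    rw [Real.sqrt_zero, mul_zero] at h
    exact squeeze_zero (fun N => integral_nonneg fun x => abs_nonneg _) hWQQ h
  have hPt : Tendsto (fun N : ℕ => ∫ x, |P N x - c₁| ∂μ) atTop (nhds 0) :=
    single_avg hT₁ hf₁ hB₁ hC₁0
  have hQt : Tendsto (fun N : ℕ => ∫ x, |Q N x - c₂| ∂μ) atTop (nhds 0) :=
    single_avg hT₂ hf₂ hB₂ hC₂0
  -- real-valued convergence
  have Hmain : Tendsto (fun N : ℕ =>
      ∫ x, |(1 / (N : ℝ) ^ 2) * ∑ m ∈ Icc 1 N, ∑ n ∈ Icc 1 N,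
        f₁ (T₁^[n] x) * f₂ (T₂^[m] x) * f₃ (T₃^[n + m] x) - c₁ * c₂ * c₃| ∂μ)
      atTop (nhds 0) := by
    apply squeeze_zero (fun N => integral_nonneg fun x => abs_nonneg _) hintb
    have h1 := (hQt.const_mul C₁).const_mul |c₃|
    have h2 := (hPt.const_mul |c₂|).const_mul |c₃|
    have := (hWt.add h1).add h2
    simpa using this
  -- convert to eLpNorm
  have hInt : ∀ N : ℕ, Integrable (fun x => (1 / (N : ℝ) ^ 2) * ∑ m ∈ Icc 1 N,
      ∑ n ∈ Icc 1 N, f₁ (T₁^[n] x) * f₂ (T₂^[m] x) * f₃ (T₃^[n + m] x)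
      - c₁ * c₂ * c₃) μ := by
    intro N
    apply bdd_integrable
    · apply Measurable.sub ?_ measurable_const
      apply Measurable.const_mul
      apply Finset.measurable_sum
      intro m _
      apply Finset.measurable_sum
      intro n _
      exact ((hf₁.comp (hT₁.1.measurable.iterate n)).mul
        (hf₂.comp (hT₂.1.measurable.iterate m))).mul
        (hf₃.comp (hT₃.1.measurable.iterate (n+m)))
    · intro x
      calc |(1 / (N : ℝ) ^ 2) * ∑ m ∈ Icc 1 N, ∑ n ∈ Icc 1 N,
            f₁ (T₁^[n] x) * f₂ (T₂^[m] x) * f₃ (T₃^[n + m] x) - c₁ * c₂ * c₃|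
          ≤ |W N x| + |c₃| * (C₁ * |Q N x - c₂| + |c₂| * |P N x - c₁|) := hptb N x
        _ ≤ C₂ * (C₁ * (2*C₃)) + |c₃| * (C₁ * (C₂ + |c₂|) + |c₂| * (C₁ + |c₁|)) := by
            have h1 := hW_bdd N x
            have h2 : |Q N x - c₂| ≤ C₂ + |c₂| := by
              calc |Q N x - c₂| ≤ |Q N x| + |c₂| := abs_sub _ _
                _ ≤ C₂ + |c₂| := by have := hQ_bdd N x; linarith
            have h3 : |P N x - c₁| ≤ C₁ + |c₁| := by
              calc |P N x - c₁| ≤ |P N x| + |c₁| := abs_sub _ _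
                _ ≤ C₁ + |c₁| := by have := hP_bdd N x; linarith
            have h4 : C₁ * |Q N x - c₂| + |c₂| * |P N x - c₁|
                ≤ C₁ * (C₂ + |c₂|) + |c₂| * (C₁ + |c₁|) :=
              add_le_add (mul_le_mul_of_nonneg_left h2 hC₁0)
                (mul_le_mul_of_nonneg_left h3 (abs_nonneg _))
            have h5 := mul_le_mul_of_nonneg_left h4 (abs_nonneg c₃)
            linarith
  have hconv : ∀ N : ℕ, eLpNorm (fun x =>
      (1 / (N : ℝ) ^ 2) * ∑ m ∈ Finset.Icc 1 N, ∑ n ∈ Finset.Icc 1 N,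
        f₁ (T₁^[n] x) * f₂ (T₂^[m] x) * f₃ (T₃^[n + m] x) - c₁ * c₂ * c₃) 1 μ
      = ENNReal.ofReal (∫ x, |(1 / (N : ℝ) ^ 2) * ∑ m ∈ Icc 1 N, ∑ n ∈ Icc 1 N,
        f₁ (T₁^[n] x) * f₂ (T₂^[m] x) * f₃ (T₃^[n + m] x) - c₁ * c₂ * c₃| ∂μ) := by
    intro N
    rw [eLpNorm_one_eq_lintegral_enorm,
      ← ofReal_integral_norm_eq_lintegral_enorm (hInt N)]
    simp only [Real.norm_eq_abs]
  have hfinal := ENNReal.tendsto_ofReal Hmain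
  rw [ENNReal.ofReal_zero] at hfinal
  have : (fun N : ℕ => eLpNorm (fun x =>
      (1 / (N : ℝ) ^ 2) * ∑ m ∈ Finset.Icc 1 N, ∑ n ∈ Finset.Icc 1 N,
        f₁ (T₁^[n] x) * f₂ (T₂^[m] x) * f₃ (T₃^[n + m] x) - c₁ * c₂ * c₃) 1 μ)
      = fun N : ℕ => ENNReal.ofReal (∫ x, |(1 / (N : ℝ) ^ 2) * ∑ m ∈ Icc 1 N,
        ∑ n ∈ Icc 1 N, f₁ (T₁^[n] x) * f₂ (T₂^[m] x) * f₃ (T₃^[n + m] x)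
        - c₁ * c₂ * c₃| ∂μ) := funext fun N => hconv N
  rw [this]
  exact hfinal
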